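/- arXiv:1505.02344 — 2 statements merged into one kernel-verified Lean document; each statement's English description precedes it below -/
import Mathlib

section
/- Let L be a Lie derivation of G. If L is proper then: (A') hA(a) ∈ π_B(Z(G)) for all a ∈ A and hB(b) ∈ π_A(Z(G)) for all b ∈ B; and (B') hB(nm) + hA(mn) ∈ Z(G) for all m ∈ M, n ∈ N. Conversely, if M is faithful and conditions (A') and (B') hold, then L is proper. -/
/-- `x` lies in the Peirce corner `A = eGe`. -/
def cA {G : Type*} [Ring G] (e x : G) : Prop := e * x * e = x

/-- `x` lies in the Peirce corner `B = fGf`, where `f = 1 - e`. -/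
def cB {G : Type*} [Ring G] (e x : G) : Prop := (1 - e) * x * (1 - e) = x

/-- `x` lies in the Peirce corner `M = eGf`. -/
def cM {G : Type*} [Ring G] (e x : G) : Prop := e * x * (1 - e) = x

/-- `x` lies in the Peirce corner `N = fGe`. -/
def cN {G : Type*} [Ring G] (e x : G) : Prop := (1 - e) * x * e = x

/-- `z` lies in the center `Z(G)`. -/
def Ctr {G : Type*} [Ring G] (z : G) : Prop := ∀ x : G, z * x = x * z

/-- `L` is a Lie derivation of `G` (with respect to the commutator `[x,y] = xy - yx`). -/
def IsLieDer {R : Type*} [CommRing R] {G : Type*} [Ring G] [Algebra R G]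
    (L : G →ₗ[R] G) : Prop :=
  ∀ x y : G, L (x * y - y * x) = L x * y - y * L x + (x * L y - L y * x)

/-- `D` is a derivation of `G`. -/
def IsDer {R : Type*} [CommRing R] {G : Type*} [Ring G] [Algebra R G]
    (D : G →ₗ[R] G) : Prop :=
  ∀ x y : G, D (x * y) = D x * y + x * D y

/-- `L` is a proper Lie derivation: `L = D + τ` for a derivation `D` and a central-valued
`τ` vanishing on all commutators. -/
def IsProper {R : Type*} [CommRing R] {G : Type*} [Ring G] [Algebra R G]
    (L : G →ₗ[R] G) : Prop :=
  ∃ D τ : G →ₗ[R] G, IsDer D ∧ (∀ x : G, Ctr (τ x)) ∧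
    (∀ x y : G, τ (x * y - y * x) = 0) ∧ L = D + τ


/-- `M = eGf` is a faithful `(A,B)`-bimodule. -/
def FaithfulM {G : Type*} [Ring G] (e : G) : Prop :=
  (∀ a : G, cA e a → (∀ m : G, cM e m → a * m = 0) → a = 0) ∧
  (∀ b : G, cB e b → (∀ m : G, cM e m → m * b = 0) → b = 0)
namespace S4

variable {G : Type*} [Ring G]

lemma massoc {x y z : G} (h : x * y = z) (w : G) : x * (y * w) = z * w := by
  rw [← mul_assoc, h]

section gen
variable {p q r s x y : G}

lemma gen1 (hp : p * p = p) (hx : p * x * q = x) : p * x = x := by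
  conv_lhs => rw [← hx]
  rw [← mul_assoc, ← mul_assoc, hp, hx]

lemma gen2 (hq : q * q = q) (hx : p * x * q = x) : x * q = x := by
  conv_lhs => rw [← hx]
  rw [mul_assoc, hq, hx]

lemma gen3 (hrp : r * p = 0) (hx : p * x * q = x) : r * x = 0 := by
  conv_lhs => rw [← hx]
  rw [← mul_assoc, ← mul_assoc, hrp, zero_mul, zero_mul]

lemma gen4 (hqs : q * s = 0) (hx : p * x * q = x) : x * s = 0 := by
  conv_lhs => rw [← hx]
  rw [mul_assoc, hqs, mul_zero]

lemma zc (h1 : x * s = 0) (h2 : s * y = y) : x * y = 0 := by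
  rw [← h2, ← mul_assoc, h1, zero_mul]

lemma gen_mk (hp : p * p = p) (hq : q * q = q) (x : G) :
    p * (p * x * q) * q = p * x * q := by
  rw [← mul_assoc, ← mul_assoc, hp, mul_assoc, hq]

lemma gen_sub (hx : p * x * q = x) (hy : p * y * q = y) : p * (x - y) * q = x - y := by
  rw [mul_sub, sub_mul, hx, hy]

lemma gen_add (hx : p * x * q = x) (hy : p * y * q = y) : p * (x + y) * q = x + y := by
  rw [mul_add, add_mul, hx, hy]

lemma gmul (hp : p * p = p) (hr : r * r = r) (hx : p * x * q = x) (hy : q * y * r = y) :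
    p * (x * y) * r = x * y := by
  rw [← mul_assoc, gen1 hp hx, mul_assoc, gen2 hr hy]

lemma peirce_ef {e f : G} (hu : e + f = 1) (x : G) :
    x = e * x * e + e * x * f + f * x * e + f * x * f := by
  have h : x = (e + f) * x * (e + f) := by rw [hu, one_mul, mul_one]
  conv_lhs => rw [h]
  noncomm_ring

lemma diag_ef {e f : G} (hu : e + f = 1) {x : G} (h1 : e * x * f = 0) (h2 : f * x * e = 0) :
    x = e * x * e + f * x * f := by
  conv_lhs => rw [peirce_ef hu x]
  rw [h1, h2, add_zero, add_zero]

end gen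

section idem
variable {e : G}

lemma ef0 (he : e * e = e) : e * (1 - e) = 0 := by rw [mul_sub, mul_one, he, sub_self]

lemma fe0 (he : e * e = e) : (1 - e) * e = 0 := by rw [sub_mul, one_mul, he, sub_self]

lemma ffi (he : e * e = e) : (1 - e) * (1 - e) = (1 - e) := by
  rw [sub_mul, one_mul, ef0 he, sub_zero]

lemma efu : e + (1 - e) = 1 := by abel

lemma mkA (he : e * e = e) (x : G) : cA e (e * x * e) := gen_mk he he x
lemma mkM (he : e * e = e) (x : G) : cM e (e * x * (1 - e)) := gen_mk he (ffi he) x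
lemma mkN (he : e * e = e) (x : G) : cN e ((1 - e) * x * e) := gen_mk (ffi he) he x
lemma mkB (he : e * e = e) (x : G) : cB e ((1 - e) * x * (1 - e)) := gen_mk (ffi he) (ffi he) x

end idem

section center
variable {e f z z' m n : G}

lemma ctr0 : Ctr (0 : G) := fun x => by rw [zero_mul, mul_zero]

lemma ctr_add (h : Ctr z) (h' : Ctr z') : Ctr (z + z') := fun x => by
  rw [add_mul, mul_add, h x, h' x]

lemma ctrP (he : e * e = e) (hf : f * f = f) (hu : e + f = 1) (hz : Ctr z) :
    z = e * z * e + f * z * f := by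
  have h1 : e * z * e = z * e := by rw [← hz e, mul_assoc, he]
  have h2 : f * z * f = z * f := by rw [← hz f, mul_assoc, hf]
  rw [h1, h2, ← mul_add, hu, mul_one]

lemma ctr_mM (he : e * e = e) (hf : f * f = f) (hz : Ctr z) (hm : e * m * f = m) :
    e * z * e * m = m * (f * z * f) := by
  have h1 : e * z * e * m = m * z := by
    rw [mul_assoc, gen1 he hm, mul_assoc, hz m, ← mul_assoc, gen1 he hm]
  have h2 : m * (f * z * f) = m * z := by
    rw [← mul_assoc, ← mul_assoc, gen2 hf hm, mul_assoc, hz f, ← mul_assoc, gen2 hf hm]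
  rw [h1, h2]

lemma ctr_nN (he : e * e = e) (hf : f * f = f) (hz : Ctr z) (hn : f * n * e = n) :
    f * z * f * n = n * (e * z * e) := by
  have h1 : f * z * f * n = n * z := by
    rw [mul_assoc, gen1 hf hn, mul_assoc, hz n, ← mul_assoc, gen1 hf hn]
  have h2 : n * (e * z * e) = n * z := by
    rw [← mul_assoc, ← mul_assoc, gen2 he hn, mul_assoc, hz e, ← mul_assoc, gen2 he hn]
  rw [h1, h2]

lemma ctr_uniq_f (he : e * e = e) (hF : FaithfulM e) (hz : Ctr z) (hz' : Ctr z')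
    (h : (1 - e) * z * (1 - e) = (1 - e) * z' * (1 - e)) : z = z' := by
  have key : ∀ m : G, cM e m → (e * z * e - e * z' * e) * m = 0 := by
    intro m hm
    rw [sub_mul, ctr_mM he (ffi he) hz hm, ctr_mM he (ffi he) hz' hm, h, sub_self]
  have h2 : e * z * e - e * z' * e = 0 := hF.1 _ (gen_sub (mkA he z) (mkA he z')) key
  have h3 : e * z * e = e * z' * e := sub_eq_zero.mp h2
  rw [ctrP he (ffi he) efu hz, ctrP he (ffi he) efu hz', h3, h]

lemma ctr_uniq_e (he : e * e = e) (hF : FaithfulM e) (hz : Ctr z) (hz' : Ctr z')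
    (h : e * z * e = e * z' * e) : z = z' := by
  have key : ∀ m : G, cM e m → m * ((1 - e) * z * (1 - e) - (1 - e) * z' * (1 - e)) = 0 := by
    intro m hm
    rw [mul_sub, ← ctr_mM he (ffi he) hz hm, ← ctr_mM he (ffi he) hz' hm, h, sub_self]
  have h2 : (1 - e) * z * (1 - e) - (1 - e) * z' * (1 - e) = 0 :=
    hF.2 _ (gen_sub (mkB he z) (mkB he z')) key
  have h3 : (1 - e) * z * (1 - e) = (1 - e) * z' * (1 - e) := sub_eq_zero.mp h2
  rw [ctrP he (ffi he) efu hz, ctrP he (ffi he) efu hz', h3, h]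

end center

end S4
namespace S4
section structural
variable {R : Type*} [CommRing R] {G : Type*} [Ring G] [Algebra R G]
variable {e f : G} {K : G →ₗ[R] G}

lemma LemM (he : e * e = e) (hf : f * f = f) (hef : e * f = 0) (hfe : f * e = 0)
    (hu : e + f = 1) (hK : IsLieDer K)
    (hKd : K e = e * K e * e + f * K e * f)
    (hN2' : ∀ x : G, f * x * e = x → x + x = 0 → x = 0)
    {m : G} (hm : e * m * f = m) : e * K m * f = K m := by
  obtain ⟨P, Q, hP, hQ, hPQ⟩ : ∃ P Q, e * P * e = P ∧ f * Q * f = Q ∧ K e = P + Q :=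
    ⟨_, _, gen_mk he he _, gen_mk hf hf _, hKd⟩
  have hid := hK e m
  rw [gen1 he hm, gen4 hfe hm, sub_zero] at hid
  have m1 := gen1 he hm; have m2 := gen2 hf hm; have m3 := gen3 hfe hm; have m4 := gen4 hfe hm
  have p1 := gen1 he hP; have p2 := gen2 he hP; have p3 := gen3 hfe hP; have p4 := gen4 hef hP
  have q1 := gen1 hf hQ; have q2 := gen2 hf hQ; have q3 := gen3 hef hQ; have q4 := gen4 hfe hQ
  have zmp : m * P = 0 := zc m4 p1
  have zqm : Q * m = 0 := zc q4 m1
  have pee : e * K m * e = 0 := by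
    have h2 := congrArg (fun t => e * t * e) hid
    simp only [hPQ, mul_assoc, mul_add, add_mul, mul_sub, sub_mul, mul_neg, neg_mul,
      he, massoc he, hf, massoc hf, hef, massoc hef, hfe, massoc hfe,
      m1, massoc m1, m2, massoc m2, m3, massoc m3, m4, massoc m4,
      p1, massoc p1, p2, massoc p2, p3, massoc p3, p4, massoc p4,
      q1, massoc q1, q2, massoc q2, q3, massoc q3, q4, massoc q4,
      zmp, massoc zmp, zqm, massoc zqm,
      mul_zero, zero_mul, add_zero, zero_add, sub_zero, zero_sub, sub_self,
      neg_zero, neg_neg] at h2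
    rw [mul_assoc]; exact h2
  have pff : f * K m * f = 0 := by
    have h2 := congrArg (fun t => f * t * f) hid
    simp only [hPQ, mul_assoc, mul_add, add_mul, mul_sub, sub_mul, mul_neg, neg_mul,
      he, massoc he, hf, massoc hf, hef, massoc hef, hfe, massoc hfe,
      m1, massoc m1, m2, massoc m2, m3, massoc m3, m4, massoc m4,
      p1, massoc p1, p2, massoc p2, p3, massoc p3, p4, massoc p4,
      q1, massoc q1, q2, massoc q2, q3, massoc q3, q4, massoc q4,
      zmp, massoc zmp, zqm, massoc zqm,
      mul_zero, zero_mul, add_zero, zero_add, sub_zero, zero_sub, sub_self,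
      neg_zero, neg_neg] at h2
    rw [mul_assoc]; exact h2
  have pfe : f * K m * e = 0 := by
    have h2 := congrArg (fun t => f * t * e) hid
    simp only [hPQ, mul_assoc, mul_add, add_mul, mul_sub, sub_mul, mul_neg, neg_mul,
      he, massoc he, hf, massoc hf, hef, massoc hef, hfe, massoc hfe,
      m1, massoc m1, m2, massoc m2, m3, massoc m3, m4, massoc m4,
      p1, massoc p1, p2, massoc p2, p3, massoc p3, p4, massoc p4,
      q1, massoc q1, q2, massoc q2, q3, massoc q3, q4, massoc q4,
      zmp, massoc zmp, zqm, massoc zqm,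
      mul_zero, zero_mul, add_zero, zero_add, sub_zero, zero_sub, sub_self,
      neg_zero, neg_neg] at h2
    refine hN2' _ (gen_mk hf he (K m)) ?_
    rw [mul_assoc]
    nth_rewrite 1 [h2]
    abel
  conv_rhs => rw [peirce_ef hu (K m)]
  rw [pee, pfe, pff, zero_add, add_zero, add_zero]

lemma LemN (he : e * e = e) (hf : f * f = f) (hef : e * f = 0) (hfe : f * e = 0)
    (hu : e + f = 1) (hK : IsLieDer K)
    (hKd : K e = e * K e * e + f * K e * f)
    (hM2' : ∀ x : G, e * x * f = x → x + x = 0 → x = 0)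
    {n : G} (hn : f * n * e = n) : f * K n * e = K n := by
  obtain ⟨P, Q, hP, hQ, hPQ⟩ : ∃ P Q, e * P * e = P ∧ f * Q * f = Q ∧ K e = P + Q :=
    ⟨_, _, gen_mk he he _, gen_mk hf hf _, hKd⟩
  have hid := hK e n
  rw [gen3 hef hn, gen2 he hn, zero_sub, map_neg] at hid
  -- hid : -K n = K e * n - n * K e + (e * K n - K n * e)
  have n1 := gen1 hf hn; have n2 := gen2 he hn; have n3 := gen3 hef hn; have n4 := gen4 hef hn
  have p1 := gen1 he hP; have p2 := gen2 he hP; have p3 := gen3 hfe hP; have p4 := gen4 hef hP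
  have q1 := gen1 hf hQ; have q2 := gen2 hf hQ; have q3 := gen3 hef hQ; have q4 := gen4 hfe hQ
  have znq : n * Q = 0 := zc n4 q1
  have zpn : P * n = 0 := zc p4 n1
  have pee : e * K n * e = 0 := by
    have h2 := congrArg (fun t => e * t * e) hid
    simp only [hPQ, mul_assoc, mul_add, add_mul, mul_sub, sub_mul, mul_neg, neg_mul,
      he, massoc he, hf, massoc hf, hef, massoc hef, hfe, massoc hfe,
      n1, massoc n1, n2, massoc n2, n3, massoc n3, n4, massoc n4,
      p1, massoc p1, p2, massoc p2, p3, massoc p3, p4, massoc p4,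
      q1, massoc q1, q2, massoc q2, q3, massoc q3, q4, massoc q4,
      znq, massoc znq, zpn, massoc zpn,
      mul_zero, zero_mul, add_zero, zero_add, sub_zero, zero_sub, sub_self,
      neg_zero, neg_neg] at h2
    rw [mul_assoc]; exact neg_eq_zero.mp h2
  have pff : f * K n * f = 0 := by
    have h2 := congrArg (fun t => f * t * f) hid
    simp only [hPQ, mul_assoc, mul_add, add_mul, mul_sub, sub_mul, mul_neg, neg_mul,
      he, massoc he, hf, massoc hf, hef, massoc hef, hfe, massoc hfe,
      n1, massoc n1, n2, massoc n2, n3, massoc n3, n4, massoc n4,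
      p1, massoc p1, p2, massoc p2, p3, massoc p3, p4, massoc p4,
      q1, massoc q1, q2, massoc q2, q3, massoc q3, q4, massoc q4,
      znq, massoc znq, zpn, massoc zpn,
      mul_zero, zero_mul, add_zero, zero_add, sub_zero, zero_sub, sub_self,
      neg_zero, neg_neg] at h2
    rw [mul_assoc]; exact neg_eq_zero.mp h2
  have pef : e * K n * f = 0 := by
    have h2 := congrArg (fun t => e * t * f) hid
    simp only [hPQ, mul_assoc, mul_add, add_mul, mul_sub, sub_mul, mul_neg, neg_mul,
      he, massoc he, hf, massoc hf, hef, massoc hef, hfe, massoc hfe,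
      n1, massoc n1, n2, massoc n2, n3, massoc n3, n4, massoc n4,
      p1, massoc p1, p2, massoc p2, p3, massoc p3, p4, massoc p4,
      q1, massoc q1, q2, massoc q2, q3, massoc q3, q4, massoc q4,
      znq, massoc znq, zpn, massoc zpn,
      mul_zero, zero_mul, add_zero, zero_add, sub_zero, zero_sub, sub_self,
      neg_zero, neg_neg] at h2
    refine hM2' _ (gen_mk he hf (K n)) ?_
    rw [mul_assoc]
    nth_rewrite 1 [h2.symm]
    abel
  conv_rhs => rw [peirce_ef hu (K n)]
  rw [pee, pef, pff, zero_add, zero_add, add_zero]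

lemma LemA (he : e * e = e) (hf : f * f = f) (hef : e * f = 0) (hfe : f * e = 0)
    (hu : e + f = 1) (hK : IsLieDer K)
    (hKd : K e = e * K e * e + f * K e * f)
    {a : G} (ha : e * a * e = a) : K a = e * K a * e + f * K a * f := by
  obtain ⟨P, Q, hP, hQ, hPQ⟩ : ∃ P Q, e * P * e = P ∧ f * Q * f = Q ∧ K e = P + Q :=
    ⟨_, _, gen_mk he he _, gen_mk hf hf _, hKd⟩
  have hid := hK a e
  rw [gen2 he ha, gen1 he ha, sub_self, map_zero] at hid
  -- hid : 0 = K a * e - e * K a + (a * K e - K e * a)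
  have a1 := gen1 he ha; have a2 := gen2 he ha; have a3 := gen3 hfe ha; have a4 := gen4 hef ha
  have p1 := gen1 he hP; have p2 := gen2 he hP; have p3 := gen3 hfe hP; have p4 := gen4 hef hP
  have q1 := gen1 hf hQ; have q2 := gen2 hf hQ; have q3 := gen3 hef hQ; have q4 := gen4 hfe hQ
  have zaq : a * Q = 0 := zc a4 q1
  have zqa : Q * a = 0 := zc q4 a1
  have pef : e * K a * f = 0 := by
    have h2 := congrArg (fun t => e * t * f) hid
    simp only [hPQ, mul_assoc, mul_add, add_mul, mul_sub, sub_mul, mul_neg, neg_mul,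
      he, massoc he, hf, massoc hf, hef, massoc hef, hfe, massoc hfe,
      a1, massoc a1, a2, massoc a2, a3, massoc a3, a4, massoc a4,
      p1, massoc p1, p2, massoc p2, p3, massoc p3, p4, massoc p4,
      q1, massoc q1, q2, massoc q2, q3, massoc q3, q4, massoc q4,
      zaq, massoc zaq, zqa, massoc zqa,
      mul_zero, zero_mul, add_zero, zero_add, sub_zero, zero_sub, sub_self,
      neg_zero, neg_neg] at h2
    rw [mul_assoc]; exact neg_eq_zero.mp h2.symm
  have pfe : f * K a * e = 0 := by
    have h2 := congrArg (fun t => f * t * e) hid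
    simp only [hPQ, mul_assoc, mul_add, add_mul, mul_sub, sub_mul, mul_neg, neg_mul,
      he, massoc he, hf, massoc hf, hef, massoc hef, hfe, massoc hfe,
      a1, massoc a1, a2, massoc a2, a3, massoc a3, a4, massoc a4,
      p1, massoc p1, p2, massoc p2, p3, massoc p3, p4, massoc p4,
      q1, massoc q1, q2, massoc q2, q3, massoc q3, q4, massoc q4,
      zaq, massoc zaq, zqa, massoc zqa,
      mul_zero, zero_mul, add_zero, zero_add, sub_zero, zero_sub, sub_self,
      neg_zero, neg_neg] at h2
    rw [mul_assoc]; exact h2.symm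
  exact diag_ef hu pef pfe

lemma LemB (he : e * e = e) (hf : f * f = f) (hef : e * f = 0) (hfe : f * e = 0)
    (hu : e + f = 1) (hK : IsLieDer K)
    (hKd : K e = e * K e * e + f * K e * f)
    {b : G} (hb : f * b * f = b) : K b = e * K b * e + f * K b * f := by
  obtain ⟨P, Q, hP, hQ, hPQ⟩ : ∃ P Q, e * P * e = P ∧ f * Q * f = Q ∧ K e = P + Q :=
    ⟨_, _, gen_mk he he _, gen_mk hf hf _, hKd⟩
  have hid := hK b e
  rw [gen4 hfe hb, gen3 hef hb, sub_zero, map_zero] at hid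
  -- hid : 0 = K b * e - e * K b + (b * K e - K e * b)
  have b1 := gen1 hf hb; have b2 := gen2 hf hb; have b3 := gen3 hef hb; have b4 := gen4 hfe hb
  have p1 := gen1 he hP; have p2 := gen2 he hP; have p3 := gen3 hfe hP; have p4 := gen4 hef hP
  have q1 := gen1 hf hQ; have q2 := gen2 hf hQ; have q3 := gen3 hef hQ; have q4 := gen4 hfe hQ
  have zbp : b * P = 0 := zc b4 p1
  have zpb : P * b = 0 := zc p4 b1
  have pef : e * K b * f = 0 := by
    have h2 := congrArg (fun t => e * t * f) hid
    simp only [hPQ, mul_assoc, mul_add, add_mul, mul_sub, sub_mul, mul_neg, neg_mul,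
      he, massoc he, hf, massoc hf, hef, massoc hef, hfe, massoc hfe,
      b1, massoc b1, b2, massoc b2, b3, massoc b3, b4, massoc b4,
      p1, massoc p1, p2, massoc p2, p3, massoc p3, p4, massoc p4,
      q1, massoc q1, q2, massoc q2, q3, massoc q3, q4, massoc q4,
      zbp, massoc zbp, zpb, massoc zpb,
      mul_zero, zero_mul, add_zero, zero_add, sub_zero, zero_sub, sub_self,
      neg_zero, neg_neg] at h2
    rw [mul_assoc]; exact neg_eq_zero.mp h2.symm
  have pfe : f * K b * e = 0 := by
    have h2 := congrArg (fun t => f * t * e) hid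
    simp only [hPQ, mul_assoc, mul_add, add_mul, mul_sub, sub_mul, mul_neg, neg_mul,
      he, massoc he, hf, massoc hf, hef, massoc hef, hfe, massoc hfe,
      b1, massoc b1, b2, massoc b2, b3, massoc b3, b4, massoc b4,
      p1, massoc p1, p2, massoc p2, p3, massoc p3, p4, massoc p4,
      q1, massoc q1, q2, massoc q2, q3, massoc q3, q4, massoc q4,
      zbp, massoc zbp, zpb, massoc zpb,
      mul_zero, zero_mul, add_zero, zero_add, sub_zero, zero_sub, sub_self,
      neg_zero, neg_neg] at h2
    rw [mul_assoc]; exact h2.symm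
  exact diag_ef hu pef pfe

end structural
end S4
namespace S4
section structural2
variable {R : Type*} [CommRing R] {G : Type*} [Ring G] [Algebra R G]
variable {e f : G} {K : G →ₗ[R] G}

lemma LemAM (he : e * e = e) (hf : f * f = f) (hef : e * f = 0) (hfe : f * e = 0)
    (hK : IsLieDer K) {a m : G} (ha : e * a * e = a) (hm : e * m * f = m)
    (hKa : K a = e * K a * e + f * K a * f) (hKm : e * K m * f = K m) :
    K (a * m) = e * K a * e * m - m * (f * K a * f) + a * K m := by
  obtain ⟨P, Q, hP, hQ, hPQ⟩ : ∃ P Q, e * P * e = P ∧ f * Q * f = Q ∧ K a = P + Q :=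
    ⟨_, _, gen_mk he he _, gen_mk hf hf _, hKa⟩
  have a1 := gen1 he ha; have a2 := gen2 he ha; have a3 := gen3 hfe ha; have a4 := gen4 hef ha
  have m1 := gen1 he hm; have m2 := gen2 hf hm; have m3 := gen3 hfe hm; have m4 := gen4 hfe hm
  have p1 := gen1 he hP; have p2 := gen2 he hP; have p3 := gen3 hfe hP; have p4 := gen4 hef hP
  have q1 := gen1 hf hQ; have q2 := gen2 hf hQ; have q3 := gen3 hef hQ; have q4 := gen4 hfe hQ
  have km1 := gen1 he hKm; have km2 := gen2 hf hKm; have km3 := gen3 hfe hKm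
  have km4 := gen4 hfe hKm
  have zma : m * a = 0 := zc m4 a1
  have hid := hK a m
  rw [zma, sub_zero] at hid
  -- hid : K (a*m) = K a * m - m * K a + (a * K m - K m * a)
  have zKma : K m * a = 0 := zc km4 a1
  have zmP : m * P = 0 := zc m4 p1
  have zQm : Q * m = 0 := zc q4 m1
  rw [hid, hPQ]
  simp only [mul_assoc, mul_add, add_mul, mul_sub, sub_mul, mul_neg, neg_mul,
    he, massoc he, hf, massoc hf, hef, massoc hef, hfe, massoc hfe,
    a1, massoc a1, a2, massoc a2, a3, massoc a3, a4, massoc a4,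
    m1, massoc m1, m2, massoc m2, m3, massoc m3, m4, massoc m4,
    p1, massoc p1, p2, massoc p2, p3, massoc p3, p4, massoc p4,
    q1, massoc q1, q2, massoc q2, q3, massoc q3, q4, massoc q4,
    km1, massoc km1, km2, massoc km2, km3, massoc km3, km4, massoc km4,
    zKma, massoc zKma, zmP, massoc zmP, zQm, massoc zQm,
    mul_zero, zero_mul, add_zero, zero_add, sub_zero, zero_sub, sub_self,
    neg_zero, neg_neg]
  try abel

lemma LemNA (he : e * e = e) (hf : f * f = f) (hef : e * f = 0) (hfe : f * e = 0)
    (hK : IsLieDer K) {a n : G} (ha : e * a * e = a) (hn : f * n * e = n)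
    (hKa : K a = e * K a * e + f * K a * f) (hKn : f * K n * e = K n) :
    K (n * a) = n * (e * K a * e) - f * K a * f * n + K n * a := by
  obtain ⟨P, Q, hP, hQ, hPQ⟩ : ∃ P Q, e * P * e = P ∧ f * Q * f = Q ∧ K a = P + Q :=
    ⟨_, _, gen_mk he he _, gen_mk hf hf _, hKa⟩
  have a1 := gen1 he ha; have a2 := gen2 he ha; have a3 := gen3 hfe ha; have a4 := gen4 hef ha
  have n1 := gen1 hf hn; have n2 := gen2 he hn; have n3 := gen3 hef hn; have n4 := gen4 hef hn
  have p1 := gen1 he hP; have p2 := gen2 he hP; have p3 := gen3 hfe hP; have p4 := gen4 hef hP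
  have q1 := gen1 hf hQ; have q2 := gen2 hf hQ; have q3 := gen3 hef hQ; have q4 := gen4 hfe hQ
  have kn1 := gen1 hf hKn; have kn2 := gen2 he hKn; have kn3 := gen3 hef hKn
  have kn4 := gen4 hef hKn
  have zan : a * n = 0 := zc a4 n1
  have hid := hK a n
  rw [zan, zero_sub, map_neg] at hid
  -- hid : -K (n*a) = K a * n - n * K a + (a * K n - K n * a)
  have hid2 : K (n * a) = -(K a * n - n * K a + (a * K n - K n * a)) := by
    rw [← hid, neg_neg]
  have zPn : P * n = 0 := zc p4 n1
  have znQ : n * Q = 0 := zc n4 q1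
  have zaKn : a * K n = 0 := zc a4 kn1
  rw [hid2, hPQ]
  simp only [mul_assoc, mul_add, add_mul, mul_sub, sub_mul, mul_neg, neg_mul, neg_add, neg_sub,
    he, massoc he, hf, massoc hf, hef, massoc hef, hfe, massoc hfe,
    a1, massoc a1, a2, massoc a2, a3, massoc a3, a4, massoc a4,
    n1, massoc n1, n2, massoc n2, n3, massoc n3, n4, massoc n4,
    p1, massoc p1, p2, massoc p2, p3, massoc p3, p4, massoc p4,
    q1, massoc q1, q2, massoc q2, q3, massoc q3, q4, massoc q4,
    kn1, massoc kn1, kn2, massoc kn2, kn3, massoc kn3, kn4, massoc kn4,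
    zPn, massoc zPn, znQ, massoc znQ, zaKn, massoc zaKn,
    mul_zero, zero_mul, add_zero, zero_add, sub_zero, zero_sub, sub_self,
    neg_zero, neg_neg]
  try abel

lemma LemMB (he : e * e = e) (hf : f * f = f) (hef : e * f = 0) (hfe : f * e = 0)
    (hK : IsLieDer K) {m b : G} (hm : e * m * f = m) (hb : f * b * f = b)
    (hKb : K b = e * K b * e + f * K b * f) (hKm : e * K m * f = K m) :
    K (m * b) = K m * b + m * (f * K b * f) - e * K b * e * m := by
  obtain ⟨P, Q, hP, hQ, hPQ⟩ : ∃ P Q, e * P * e = P ∧ f * Q * f = Q ∧ K b = P + Q :=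
    ⟨_, _, gen_mk he he _, gen_mk hf hf _, hKb⟩
  have b1 := gen1 hf hb; have b2 := gen2 hf hb; have b3 := gen3 hef hb; have b4 := gen4 hfe hb
  have m1 := gen1 he hm; have m2 := gen2 hf hm; have m3 := gen3 hfe hm; have m4 := gen4 hfe hm
  have p1 := gen1 he hP; have p2 := gen2 he hP; have p3 := gen3 hfe hP; have p4 := gen4 hef hP
  have q1 := gen1 hf hQ; have q2 := gen2 hf hQ; have q3 := gen3 hef hQ; have q4 := gen4 hfe hQ
  have km1 := gen1 he hKm; have km2 := gen2 hf hKm; have km3 := gen3 hfe hKm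
  have km4 := gen4 hfe hKm
  have zbm : b * m = 0 := zc b4 m1
  have hid := hK m b
  rw [zbm, sub_zero] at hid
  -- hid : K (m*b) = K m * b - b * K m + (m * K b - K b * m)
  have zbKm : b * K m = 0 := zc b4 km1
  have zmP : m * P = 0 := zc m4 p1
  have zQm : Q * m = 0 := zc q4 m1
  rw [hid, hPQ]
  simp only [mul_assoc, mul_add, add_mul, mul_sub, sub_mul, mul_neg, neg_mul,
    he, massoc he, hf, massoc hf, hef, massoc hef, hfe, massoc hfe,
    b1, massoc b1, b2, massoc b2, b3, massoc b3, b4, massoc b4,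
    m1, massoc m1, m2, massoc m2, m3, massoc m3, m4, massoc m4,
    p1, massoc p1, p2, massoc p2, p3, massoc p3, p4, massoc p4,
    q1, massoc q1, q2, massoc q2, q3, massoc q3, q4, massoc q4,
    km1, massoc km1, km2, massoc km2, km3, massoc km3, km4, massoc km4,
    zbKm, massoc zbKm, zmP, massoc zmP, zQm, massoc zQm,
    mul_zero, zero_mul, add_zero, zero_add, sub_zero, zero_sub, sub_self,
    neg_zero, neg_neg]
  try abel

lemma LemBN (he : e * e = e) (hf : f * f = f) (hef : e * f = 0) (hfe : f * e = 0)
    (hK : IsLieDer K) {b n : G} (hb : f * b * f = b) (hn : f * n * e = n)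
    (hKb : K b = e * K b * e + f * K b * f) (hKn : f * K n * e = K n) :
    K (b * n) = f * K b * f * n - n * (e * K b * e) + b * K n := by
  obtain ⟨P, Q, hP, hQ, hPQ⟩ : ∃ P Q, e * P * e = P ∧ f * Q * f = Q ∧ K b = P + Q :=
    ⟨_, _, gen_mk he he _, gen_mk hf hf _, hKb⟩
  have b1 := gen1 hf hb; have b2 := gen2 hf hb; have b3 := gen3 hef hb; have b4 := gen4 hfe hb
  have n1 := gen1 hf hn; have n2 := gen2 he hn; have n3 := gen3 hef hn; have n4 := gen4 hef hn
  have p1 := gen1 he hP; have p2 := gen2 he hP; have p3 := gen3 hfe hP; have p4 := gen4 hef hP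
  have q1 := gen1 hf hQ; have q2 := gen2 hf hQ; have q3 := gen3 hef hQ; have q4 := gen4 hfe hQ
  have kn1 := gen1 hf hKn; have kn2 := gen2 he hKn; have kn3 := gen3 hef hKn
  have kn4 := gen4 hef hKn
  have znb : n * b = 0 := zc n4 b1
  have hid := hK b n
  rw [znb, sub_zero] at hid
  -- hid : K (b*n) = K b * n - n * K b + (b * K n - K n * b)
  have zKnb : K n * b = 0 := zc kn4 b1
  have zPn : P * n = 0 := zc p4 n1
  have znQ : n * Q = 0 := zc n4 q1
  rw [hid, hPQ]
  simp only [mul_assoc, mul_add, add_mul, mul_sub, sub_mul, mul_neg, neg_mul,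
    he, massoc he, hf, massoc hf, hef, massoc hef, hfe, massoc hfe,
    b1, massoc b1, b2, massoc b2, b3, massoc b3, b4, massoc b4,
    n1, massoc n1, n2, massoc n2, n3, massoc n3, n4, massoc n4,
    p1, massoc p1, p2, massoc p2, p3, massoc p3, p4, massoc p4,
    q1, massoc q1, q2, massoc q2, q3, massoc q3, q4, massoc q4,
    kn1, massoc kn1, kn2, massoc kn2, kn3, massoc kn3, kn4, massoc kn4,
    zKnb, massoc zKnb, zPn, massoc zPn, znQ, massoc znQ,
    mul_zero, zero_mul, add_zero, zero_add, sub_zero, zero_sub, sub_self,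
    neg_zero, neg_neg]
  try abel

lemma LemMNe (he : e * e = e) (hf : f * f = f) (hef : e * f = 0) (hfe : f * e = 0)
    (hK : IsLieDer K) {m n : G} (hm : e * m * f = m) (hn : f * n * e = n)
    (hKm : e * K m * f = K m) (hKn : f * K n * e = K n) :
    e * K (m * n) * e - e * K (n * m) * e = K m * n + m * K n := by
  have m1 := gen1 he hm; have m2 := gen2 hf hm; have m3 := gen3 hfe hm; have m4 := gen4 hfe hm
  have n1 := gen1 hf hn; have n2 := gen2 he hn; have n3 := gen3 hef hn; have n4 := gen4 hef hn
  have km1 := gen1 he hKm; have km2 := gen2 hf hKm; have km3 := gen3 hfe hKm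
  have km4 := gen4 hfe hKm
  have kn1 := gen1 hf hKn; have kn2 := gen2 he hKn; have kn3 := gen3 hef hKn
  have kn4 := gen4 hef hKn
  have hid := hK m n
  rw [map_sub] at hid
  have h2 := congrArg (fun t => e * t * e) hid
  simp only [mul_assoc, mul_add, add_mul, mul_sub, sub_mul, mul_neg, neg_mul,
    he, massoc he, hf, massoc hf, hef, massoc hef, hfe, massoc hfe,
    m1, massoc m1, m2, massoc m2, m3, massoc m3, m4, massoc m4,
    n1, massoc n1, n2, massoc n2, n3, massoc n3, n4, massoc n4,
    km1, massoc km1, km2, massoc km2, km3, massoc km3, km4, massoc km4,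
    kn1, massoc kn1, kn2, massoc kn2, kn3, massoc kn3, kn4, massoc kn4,
    mul_zero, zero_mul, add_zero, zero_add, sub_zero, zero_sub, sub_self,
    neg_zero, neg_neg] at h2
  simp only [mul_assoc]
  rw [h2]

lemma LemNMf (he : e * e = e) (hf : f * f = f) (hef : e * f = 0) (hfe : f * e = 0)
    (hK : IsLieDer K) {m n : G} (hm : e * m * f = m) (hn : f * n * e = n)
    (hKm : e * K m * f = K m) (hKn : f * K n * e = K n) :
    f * K (n * m) * f - f * K (m * n) * f = n * K m + K n * m := by
  have m1 := gen1 he hm; have m2 := gen2 hf hm; have m3 := gen3 hfe hm; have m4 := gen4 hfe hm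
  have n1 := gen1 hf hn; have n2 := gen2 he hn; have n3 := gen3 hef hn; have n4 := gen4 hef hn
  have km1 := gen1 he hKm; have km2 := gen2 hf hKm; have km3 := gen3 hfe hKm
  have km4 := gen4 hfe hKm
  have kn1 := gen1 hf hKn; have kn2 := gen2 he hKn; have kn3 := gen3 hef hKn
  have kn4 := gen4 hef hKn
  have hid := hK n m
  rw [map_sub] at hid
  have h2 := congrArg (fun t => f * t * f) hid
  simp only [mul_assoc, mul_add, add_mul, mul_sub, sub_mul, mul_neg, neg_mul,
    he, massoc he, hf, massoc hf, hef, massoc hef, hfe, massoc hfe,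
    m1, massoc m1, m2, massoc m2, m3, massoc m3, m4, massoc m4,
    n1, massoc n1, n2, massoc n2, n3, massoc n3, n4, massoc n4,
    km1, massoc km1, km2, massoc km2, km3, massoc km3, km4, massoc km4,
    kn1, massoc kn1, kn2, massoc kn2, kn3, massoc kn3, kn4, massoc kn4,
    mul_zero, zero_mul, add_zero, zero_add, sub_zero, zero_sub, sub_self,
    neg_zero, neg_neg] at h2
  simp only [mul_assoc]
  rw [h2]
  abel

end structural2
end S4
open S4 in
/-- Corollary 2.4: if a Lie derivation `L` of `G` is proper then
(A') `hA(A) ⊆ π_B(Z(G))` and `hB(B) ⊆ π_A(Z(G))`, and (B') `hB(nm) ⊕ hA(mn) ∈ Z(G)`;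
the converse holds when `M` is faithful. -/
theorem stmt_4
    {R : Type*} [CommRing R] {G : Type*} [Ring G] [Algebra R G]
    (e : G) (he : e * e = e) (he0 : e ≠ 0) (he1 : e ≠ 1)
    (hM2 : ∀ x : G, cM e x → x + x = 0 → x = 0)
    (hN2 : ∀ x : G, cN e x → x + x = 0 → x = 0)
    (L : G →ₗ[R] G) (hL : IsLieDer L) :
    (IsProper L →
      ((∀ a : G, cA e a →
          ∃ z : G, Ctr z ∧ (1 - e) * L a * (1 - e) = (1 - e) * z * (1 - e)) ∧
        (∀ b : G, cB e b → ∃ z : G, Ctr z ∧ e * L b * e = e * z * e) ∧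
        (∀ m n : G, cM e m → cN e n →
          Ctr (e * L (n * m) * e + (1 - e) * L (m * n) * (1 - e))))) ∧
    (FaithfulM e →
      ((∀ a : G, cA e a →
          ∃ z : G, Ctr z ∧ (1 - e) * L a * (1 - e) = (1 - e) * z * (1 - e)) ∧
        (∀ b : G, cB e b → ∃ z : G, Ctr z ∧ e * L b * e = e * z * e) ∧
        (∀ m n : G, cM e m → cN e n →
          Ctr (e * L (n * m) * e + (1 - e) * L (m * n) * (1 - e)))) →
      IsProper L) := by
  have hf := ffi he
  have hef := ef0 he
  have hfe := fe0 he
  have hu : e + (1 - e) = 1 := efu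
  constructor
  · -- forward direction
    rintro ⟨D, τ, hD, hτC, hτcomm, hLD⟩
    have hDa : ∀ a : G, cA e a → (1 - e) * D a * (1 - e) = 0 := by
      intro a ha
      have h1 : D a = D e * a + e * D a := by
        conv_lhs => rw [show a = e * a from (gen1 he ha).symm]
        exact hD e a
      rw [h1]
      have a4 := gen4 hef ha
      simp only [mul_add, add_mul, mul_assoc, a4, massoc a4, hfe, massoc hfe,
        mul_zero, zero_mul, add_zero, zero_add]
    have hDb : ∀ b : G, cB e b → e * D b * e = 0 := by
      intro b hb
      have h1 : D b = D (1 - e) * b + (1 - e) * D b := by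
        conv_lhs => rw [show b = (1 - e) * b from (gen1 hf hb).symm]
        exact hD (1 - e) b
      rw [h1]
      have b4 := gen4 hfe hb
      simp only [mul_add, add_mul, mul_assoc, b4, massoc b4, hef, massoc hef,
        mul_zero, zero_mul, add_zero, zero_add]
    refine ⟨?_, ?_, ?_⟩
    · intro a ha
      refine ⟨τ a, hτC a, ?_⟩
      rw [hLD]
      simp only [LinearMap.add_apply]
      rw [mul_add, add_mul, hDa a ha, zero_add]
    · intro b hb
      refine ⟨τ b, hτC b, ?_⟩
      rw [hLD]
      simp only [LinearMap.add_apply]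
      rw [mul_add, add_mul, hDb b hb, zero_add]
    · intro m n hm hn
      have hnm : cB e (n * m) := gmul hf hf hn hm
      have hmn : cA e (m * n) := gmul he he hm hn
      have ht : τ (n * m) = τ (m * n) := by
        have h := hτcomm n m
        rw [map_sub] at h
        exact sub_eq_zero.mp h
      have h1 : e * L (n * m) * e = e * τ (m * n) * e := by
        rw [hLD]
        simp only [LinearMap.add_apply]
        rw [mul_add, add_mul, hDb _ hnm, zero_add, ht]
      have h2 : (1 - e) * L (m * n) * (1 - e) = (1 - e) * τ (m * n) * (1 - e) := by
        rw [hLD]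
        simp only [LinearMap.add_apply]
        rw [mul_add, add_mul, hDa _ hmn, zero_add]
      rw [h1, h2, ← ctrP he hf hu (hτC (m * n))]
      exact hτC (m * n)
  · -- converse direction
    intro hF hcond
    obtain ⟨hA', hB', hAB'⟩ := hcond
    set f := (1 : G) - e with hfdef
    -- normalized Lie derivation K = L - ad(x0)
    obtain ⟨K, hKap⟩ : ∃ K : G →ₗ[R] G, ∀ y, K y = L y -
        ((f * L e * e - e * L e * f) * y - y * (f * L e * e - e * L e * f)) := by
      refine ⟨L - (LinearMap.mulLeft R (f * L e * e - e * L e * f) -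
        LinearMap.mulRight R (f * L e * e - e * L e * f)), fun y => ?_⟩
      simp [LinearMap.sub_apply, LinearMap.mulLeft_apply, LinearMap.mulRight_apply]
    have hKLie : IsLieDer K := by
      intro x y
      simp only [hKap]
      rw [hL x y]
      noncomm_ring
    have hKe : K e = e * L e * e + f * L e * f := by
      rw [hKap e]
      nth_rewrite 1 [peirce_ef hu (L e)]
      simp only [mul_sub, sub_mul, mul_add, add_mul, mul_assoc,
        he, massoc he, hf, massoc hf, hef, massoc hef, hfe, massoc hfe,
        mul_zero, zero_mul, add_zero, zero_add, sub_zero, zero_sub, sub_self, neg_zero]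
      abel
    have hKed : K e = e * K e * e + f * K e * f := by
      rw [hKe]
      simp only [mul_add, add_mul, mul_assoc,
        he, massoc he, hf, massoc hf, hef, massoc hef, hfe, massoc hfe,
        mul_zero, zero_mul, add_zero, zero_add]
    -- structural facts
    have hKA : ∀ a, cA e a → K a = e * K a * e + f * K a * f :=
      fun a ha => LemA he hf hef hfe hu hKLie hKed ha
    have hKB : ∀ b, cB e b → K b = e * K b * e + f * K b * f :=
      fun b hb => LemB he hf hef hfe hu hKLie hKed hb
    have hKM : ∀ m, cM e m → e * K m * f = K m :=
      fun m hm => LemM he hf hef hfe hu hKLie hKed (fun x hx => hN2 x hx) hm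
    have hKN : ∀ n, cN e n → f * K n * e = K n :=
      fun n hn => LemN he hf hef hfe hu hKLie hKed (fun x hx => hM2 x hx) hn
    -- transfer corners from K to L
    have TA : ∀ a, cA e a → f * K a * f = f * L a * f := by
      intro a ha
      rw [hKap a]
      have a1 := gen1 he ha; have a2 := gen2 he ha
      have a3 := gen3 hfe ha; have a4 := gen4 hef ha
      simp only [mul_sub, sub_mul, mul_add, add_mul, mul_assoc,
        he, massoc he, hf, massoc hf, hef, massoc hef, hfe, massoc hfe,
        a1, massoc a1, a2, massoc a2, a3, massoc a3, a4, massoc a4, mul_neg, neg_mul,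
        sub_neg_eq_add, neg_neg,
        mul_zero, zero_mul, add_zero, zero_add, sub_zero, zero_sub, sub_self, neg_zero]
    have TB : ∀ b, cB e b → e * K b * e = e * L b * e := by
      intro b hb
      rw [hKap b]
      have b1 := gen1 hf hb; have b2 := gen2 hf hb
      have b3 := gen3 hef hb; have b4 := gen4 hfe hb
      simp only [mul_sub, sub_mul, mul_add, add_mul, mul_assoc,
        he, massoc he, hf, massoc hf, hef, massoc hef, hfe, massoc hfe,
        b1, massoc b1, b2, massoc b2, b3, massoc b3, b4, massoc b4, mul_neg, neg_mul,
        sub_neg_eq_add, neg_neg,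
        mul_zero, zero_mul, add_zero, zero_add, sub_zero, zero_sub, sub_self, neg_zero]
    -- central selection functions
    have hz0 : ∀ x : G, ∃ z, Ctr z ∧ f * L (e * x * e) * f = f * z * f :=
      fun x => hA' _ (mkA he x)
    choose zed hzC hzE using hz0
    have hw0 : ∀ x : G, ∃ z, Ctr z ∧ e * L (f * x * f) * e = e * z * e := by
      intro x
      exact hB' (f * x * f) (show cB e (f * x * f) from by rw [hfdef]; exact mkB he x)
    choose wed hwC hwE using hw0
    -- corner specs versus K
    have hzK : ∀ a, cA e a → f * K a * f = f * zed a * f := by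
      intro a ha
      have h := hzE a
      rw [show e * a * e = a from ha] at h
      rw [TA a ha, h]
    have hwK : ∀ b, cB e b → e * K b * e = e * wed b * e := by
      intro b hb
      have h := hwE b
      rw [show f * b * f = b from by rw [hfdef]; exact hb] at h
      rw [TB b hb, h]
    -- uniqueness helpers (with f spelled out)
    have uniqf : ∀ z z' : G, Ctr z → Ctr z' → f * z * f = f * z' * f → z = z' := by
      intro z z' hz hz' h
      refine ctr_uniq_f he hF hz hz' ?_
      rw [← hfdef]; exact h
    have uniqe : ∀ z z' : G, Ctr z → Ctr z' → e * z * e = e * z' * e → z = z' :=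
      fun z z' hz hz' h => ctr_uniq_e he hF hz hz' h
    -- vanishing
    have hzed0 : ∀ x, e * x * e = 0 → zed x = 0 := by
      intro x hx
      refine uniqf _ _ (hzC x) ctr0 ?_
      have h := hzE x
      rw [hx, map_zero] at h
      simp only [mul_zero, zero_mul] at h ⊢
      exact h.symm
    have hwed0 : ∀ x, f * x * f = 0 → wed x = 0 := by
      intro x hx
      refine uniqe _ _ (hwC x) ctr0 ?_
      have h := hwE x
      rw [hx, map_zero] at h
      simp only [mul_zero, zero_mul] at h ⊢
      exact h.symm
    -- central smul
    have ctr_smul : ∀ (r : R) (z : G), Ctr z → Ctr (r • z) := by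
      intro r z hz w
      rw [smul_mul_assoc, mul_smul_comm, hz w]
    -- linearity of zed and wed
    have hzadd : ∀ x y, zed (x + y) = zed x + zed y := by
      intro x y
      refine uniqf _ _ (hzC (x + y)) (ctr_add (hzC x) (hzC y)) ?_
      rw [← hzE (x + y), show e * (x + y) * e = e * x * e + e * y * e from by
        rw [mul_add, add_mul], map_add]
      simp only [mul_add, add_mul]
      rw [hzE x, hzE y]
    have hwadd : ∀ x y, wed (x + y) = wed x + wed y := by
      intro x y
      refine uniqe _ _ (hwC (x + y)) (ctr_add (hwC x) (hwC y)) ?_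
      rw [← hwE (x + y), show f * (x + y) * f = f * x * f + f * y * f from by
        rw [mul_add, add_mul], map_add]
      simp only [mul_add, add_mul]
      rw [hwE x, hwE y]
    have hzsmul : ∀ (r : R) x, zed (r • x) = r • zed x := by
      intro r x
      refine uniqf _ _ (hzC (r • x)) (ctr_smul r _ (hzC x)) ?_
      rw [← hzE (r • x), show e * (r • x) * e = r • (e * x * e) from by
        rw [mul_smul_comm, smul_mul_assoc], map_smul]
      simp only [mul_smul_comm, smul_mul_assoc]
      rw [hzE x]
    have hwsmul : ∀ (r : R) x, wed (r • x) = r • wed x := by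
      intro r x
      refine uniqe _ _ (hwC (r • x)) (ctr_smul r _ (hwC x)) ?_
      rw [← hwE (r • x), show f * (r • x) * f = r • (f * x * f) from by
        rw [mul_smul_comm, smul_mul_assoc], map_smul]
      simp only [mul_smul_comm, smul_mul_assoc]
      rw [hwE x]
    -- build τ
    obtain ⟨τ, hτ⟩ : ∃ τ : G →ₗ[R] G, ∀ x, τ x = zed x + wed x := by
      refine ⟨⟨⟨fun x => zed x + wed x, fun x y => ?_⟩, fun r x => ?_⟩, fun x => rfl⟩
      · show zed (x + y) + wed (x + y) = (zed x + wed x) + (zed y + wed y)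
        rw [hzadd, hwadd]; abel
      · show zed (r • x) + wed (r • x) = (RingHom.id R) r • (zed x + wed x)
        rw [hzsmul, hwsmul]
        simp [smul_add]
    have hτC : ∀ x, Ctr (τ x) := fun x => by rw [hτ]; exact ctr_add (hzC x) (hwC x)
    -- τ on the corners
    have hτa : ∀ a, cA e a → τ a = zed a := by
      intro a ha
      rw [hτ, hwed0 a (by rw [gen3 hfe ha, zero_mul]), add_zero]
    have hτb : ∀ b, cB e b → τ b = wed b := by
      intro b hb
      rw [hτ, hzed0 b (by rw [gen3 hef hb, zero_mul]), zero_add]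
    have hτm : ∀ m, cM e m → τ m = 0 := by
      intro m hm
      rw [hτ, hzed0 m (by rw [gen1 he hm, gen4 hfe hm]),
        hwed0 m (by rw [gen3 hfe hm, zero_mul]), add_zero]
    have hτn : ∀ n, cN e n → τ n = 0 := by
      intro n hn
      rw [hτ, hzed0 n (by rw [gen3 hef hn, zero_mul]),
        hwed0 n (by rw [gen1 hf hn, gen4 hef hn]), add_zero]
    -- diagonal difference forms
    have hKAc : ∀ a, cA e a → K a - τ a = e * K a * e - e * zed a * e := by
      intro a ha
      rw [hτa _ ha]
      conv_lhs => rw [hKA _ ha, ctrP he hf hu (hzC a)]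
      rw [hzK _ ha]
      abel
    have hKBc : ∀ b, cB e b → K b - τ b = f * K b * f - f * wed b * f := by
      intro b hb
      rw [hτb _ hb]
      conv_lhs => rw [hKB _ hb, ctrP he hf hu (hwC b)]
      rw [hwK _ hb]
      abel
    -- the sixteen derivation cases
    have case_aa : ∀ u v, cA e u → cA e v →
        K (u * v) - τ (u * v) = (K u - τ u) * v + u * (K v - τ v) := by
      intro a a' ha ha'
      have haa : cA e (a * a') := gmul he he ha ha'
      have key : ∀ m, cM e m →
          ((e * K (a * a') * e - e * zed (a * a') * e) -
            ((e * K a * e - e * zed a * e) * a' + a * (e * K a' * e - e * zed a' * e))) * m = 0 := by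
        intro m hm
        have ham : cM e (a' * m) := gmul he hf ha' hm
        have E1 := LemAM he hf hef hfe hKLie haa hm (hKA _ haa) (hKM _ hm)
        have E2 := LemAM he hf hef hfe hKLie ha ham (hKA _ ha) (hKM _ ham)
        have E3 := LemAM he hf hef hfe hKLie ha' hm (hKA _ ha') (hKM _ hm)
        have C1 : m * (f * K (a * a') * f) = e * zed (a * a') * e * m := by
          rw [hzK _ haa]; exact (ctr_mM he hf (hzC _) hm).symm
        have C2 : (a' * m) * (f * K a * f) = e * zed a * e * (a' * m) := by
          rw [hzK _ ha]; exact (ctr_mM he hf (hzC _) ham).symm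
        have C3 : m * (f * K a' * f) = e * zed a' * e * m := by
          rw [hzK _ ha']; exact (ctr_mM he hf (hzC _) hm).symm
        have E6 : e * K (a * a') * e * m - m * (f * K (a * a') * f) + (a * a') * K m
            = e * K a * e * (a' * m) - (a' * m) * (f * K a * f) +
              a * (e * K a' * e * m - m * (f * K a' * f) + a' * K m) := by
          rw [← E3, ← E1, ← E2, ← mul_assoc]
        rw [C1, C2, C3] at E6
        have h7 : ((e * K (a * a') * e - e * zed (a * a') * e) -
              ((e * K a * e - e * zed a * e) * a' + a * (e * K a' * e - e * zed a' * e))) * m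
            = (e * K (a * a') * e * m - e * zed (a * a') * e * m + (a * a') * K m)
              - (e * K a * e * (a' * m) - e * zed a * e * (a' * m) +
                 a * (e * K a' * e * m - e * zed a' * e * m + a' * K m)) := by
          noncomm_ring
        rw [h7, E6, sub_self]
      have hD : cA e ((e * K (a * a') * e - e * zed (a * a') * e) -
          ((e * K a * e - e * zed a * e) * a' + a * (e * K a' * e - e * zed a' * e))) :=
        gen_sub (gen_sub (gen_mk he he _) (gen_mk he he _))
          (gen_add (gmul he he (gen_sub (gen_mk he he _) (gen_mk he he _)) ha')
            (gmul he he ha (gen_sub (gen_mk he he _) (gen_mk he he _))))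
      have h0 := hF.1 _ hD key
      rw [hKAc _ haa, hKAc _ ha, hKAc _ ha']
      exact sub_eq_zero.mp h0
    have case_bb : ∀ u v, cB e u → cB e v →
        K (u * v) - τ (u * v) = (K u - τ u) * v + u * (K v - τ v) := by
      intro b b' hb hb'
      have hbb : cB e (b * b') := gmul hf hf hb hb'
      have key : ∀ m, cM e m →
          m * ((f * K (b * b') * f - f * wed (b * b') * f) -
            ((f * K b * f - f * wed b * f) * b' + b * (f * K b' * f - f * wed b' * f))) = 0 := by
        intro m hm
        have hmb : cM e (m * b) := gmul he hf hm hb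
        have E1 := LemMB he hf hef hfe hKLie hm hbb (hKB _ hbb) (hKM _ hm)
        have E2 := LemMB he hf hef hfe hKLie hm hb (hKB _ hb) (hKM _ hm)
        have E3 := LemMB he hf hef hfe hKLie hmb hb' (hKB _ hb') (hKM _ hmb)
        have C1 : e * K (b * b') * e * m = m * (f * wed (b * b') * f) := by
          rw [hwK _ hbb]; exact ctr_mM he hf (hwC _) hm
        have C2 : e * K b * e * m = m * (f * wed b * f) := by
          rw [hwK _ hb]; exact ctr_mM he hf (hwC _) hm
        have C3 : e * K b' * e * (m * b) = (m * b) * (f * wed b' * f) := by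
          rw [hwK _ hb']; exact ctr_mM he hf (hwC _) hmb
        have E6 : K m * (b * b') + m * (f * K (b * b') * f) - e * K (b * b') * e * m
            = (K m * b + m * (f * K b * f) - e * K b * e * m) * b' +
              (m * b) * (f * K b' * f) - e * K b' * e * (m * b) := by
          rw [← E2, ← E1, ← E3, mul_assoc]
        rw [C1, C2, C3] at E6
        have h7 : m * ((f * K (b * b') * f - f * wed (b * b') * f) -
              ((f * K b * f - f * wed b * f) * b' + b * (f * K b' * f - f * wed b' * f)))
            = (K m * (b * b') + m * (f * K (b * b') * f) - m * (f * wed (b * b') * f))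
              - ((K m * b + m * (f * K b * f) - m * (f * wed b * f)) * b' +
                 (m * b) * (f * K b' * f) - (m * b) * (f * wed b' * f)) := by
          noncomm_ring
        rw [h7, E6, sub_self]
      have hD : cB e ((f * K (b * b') * f - f * wed (b * b') * f) -
          ((f * K b * f - f * wed b * f) * b' + b * (f * K b' * f - f * wed b' * f))) :=
        gen_sub (gen_sub (gen_mk hf hf _) (gen_mk hf hf _))
          (gen_add (gmul hf hf (gen_sub (gen_mk hf hf _) (gen_mk hf hf _)) hb')
            (gmul hf hf hb (gen_sub (gen_mk hf hf _) (gen_mk hf hf _))))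
      have h0 := hF.2 _ hD key
      rw [hKBc _ hbb, hKBc _ hb, hKBc _ hb']
      exact sub_eq_zero.mp h0
    have case_mn : ∀ u v, cM e u → cN e v →
        K (u * v) - τ (u * v) = (K u - τ u) * v + u * (K v - τ v) := by
      intro m n hm hn
      have hmn : cA e (m * n) := gmul he he hm hn
      have hnm : cB e (n * m) := gmul hf hf hn hm
      have hc : Ctr (e * K (n * m) * e + f * K (m * n) * f) := by
        have h := hAB' m n hm hn
        rw [← TB _ hnm, ← TA _ hmn] at h
        exact h
      have hzmn : zed (m * n) = e * K (n * m) * e + f * K (m * n) * f := by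
        apply uniqf _ _ (hzC _) hc
        rw [← hzK _ hmn]
        simp only [mul_add, add_mul, mul_assoc, he, massoc he, hf, massoc hf, hef, massoc hef,
          hfe, massoc hfe, mul_zero, zero_mul, zero_add, add_zero]
      rw [hτm _ hm, sub_zero, hτn _ hn, sub_zero, hτa _ hmn, hzmn]
      have R : K (m * n) - (e * K (n * m) * e + f * K (m * n) * f)
          = e * K (m * n) * e - e * K (n * m) * e := by
        nth_rewrite 1 [hKA _ hmn]
        abel
      rw [R, LemMNe he hf hef hfe hKLie hm hn (hKM _ hm) (hKN _ hn)]
    have case_nm : ∀ u v, cN e u → cM e v →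
        K (u * v) - τ (u * v) = (K u - τ u) * v + u * (K v - τ v) := by
      intro n m hn hm
      have hmn : cA e (m * n) := gmul he he hm hn
      have hnm : cB e (n * m) := gmul hf hf hn hm
      have hc : Ctr (e * K (n * m) * e + f * K (m * n) * f) := by
        have h := hAB' m n hm hn
        rw [← TB _ hnm, ← TA _ hmn] at h
        exact h
      have hwnm : wed (n * m) = e * K (n * m) * e + f * K (m * n) * f := by
        apply uniqe _ _ (hwC _) hc
        rw [← hwK _ hnm]
        simp only [mul_add, add_mul, mul_assoc, he, massoc he, hf, massoc hf, hef, massoc hef,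
          hfe, massoc hfe, mul_zero, zero_mul, zero_add, add_zero]
      rw [hτn _ hn, sub_zero, hτm _ hm, sub_zero, hτb _ hnm, hwnm]
      have R : K (n * m) - (e * K (n * m) * e + f * K (m * n) * f)
          = f * K (n * m) * f - f * K (m * n) * f := by
        nth_rewrite 1 [hKB _ hnm]
        abel
      rw [R, LemNMf he hf hef hfe hKLie hm hn (hKM _ hm) (hKN _ hn)]
      try abel
    have case_am : ∀ u v, cA e u → cM e v →
        K (u * v) - τ (u * v) = (K u - τ u) * v + u * (K v - τ v) := by
      intro a m ha hm
      rw [hτm _ (gmul he hf ha hm), sub_zero, hτm _ hm, sub_zero, hKAc _ ha]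
      have E := LemAM he hf hef hfe hKLie ha hm (hKA _ ha) (hKM _ hm)
      rw [E, hzK _ ha, ← ctr_mM he hf (hzC a) hm]
      simp only [mul_sub, sub_mul]
      try abel
    have case_ma : ∀ u v, cM e u → cA e v →
        K (u * v) - τ (u * v) = (K u - τ u) * v + u * (K v - τ v) := by
      intro m a hm ha
      have hD : cA e (e * K a * e - e * zed a * e) := gen_sub (gen_mk he he _) (gen_mk he he _)
      rw [zc (gen4 hfe hm) (gen1 he ha), map_zero, map_zero, sub_zero,
        hτm _ hm, sub_zero, hKAc _ ha,
        zc (gen4 hfe (hKM _ hm)) (gen1 he ha),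
        zc (gen4 hfe hm) (gen1 he hD), add_zero]
    have case_an : ∀ u v, cA e u → cN e v →
        K (u * v) - τ (u * v) = (K u - τ u) * v + u * (K v - τ v) := by
      intro a n ha hn
      have hD : cA e (e * K a * e - e * zed a * e) := gen_sub (gen_mk he he _) (gen_mk he he _)
      rw [zc (gen4 hef ha) (gen1 hf hn), map_zero, map_zero, sub_zero,
        hτn _ hn, sub_zero, hKAc _ ha,
        zc (gen4 hef hD) (gen1 hf hn),
        zc (gen4 hef ha) (gen1 hf (hKN _ hn)), add_zero]
    have case_na : ∀ u v, cN e u → cA e v →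
        K (u * v) - τ (u * v) = (K u - τ u) * v + u * (K v - τ v) := by
      intro n a hn ha
      rw [hτn _ (gmul hf he hn ha), sub_zero, hτn _ hn, sub_zero, hKAc _ ha]
      have E := LemNA he hf hef hfe hKLie ha hn (hKA _ ha) (hKN _ hn)
      rw [E, hzK _ ha, ctr_nN he hf (hzC a) hn]
      simp only [mul_sub, sub_mul]
      abel
    have case_mb : ∀ u v, cM e u → cB e v →
        K (u * v) - τ (u * v) = (K u - τ u) * v + u * (K v - τ v) := by
      intro m b hm hb
      rw [hτm _ (gmul he hf hm hb), sub_zero, hτm _ hm, sub_zero, hKBc _ hb]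
      have E := LemMB he hf hef hfe hKLie hm hb (hKB _ hb) (hKM _ hm)
      rw [E, hwK _ hb, ctr_mM he hf (hwC b) hm]
      simp only [mul_sub, sub_mul]
      abel
    have case_bn : ∀ u v, cB e u → cN e v →
        K (u * v) - τ (u * v) = (K u - τ u) * v + u * (K v - τ v) := by
      intro b n hb hn
      rw [hτn _ (gmul hf he hb hn), sub_zero, hτn _ hn, sub_zero, hKBc _ hb]
      have E := LemBN he hf hef hfe hKLie hb hn (hKB _ hb) (hKN _ hn)
      rw [E, hwK _ hb, ← ctr_nN he hf (hwC b) hn]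
      simp only [mul_sub, sub_mul]
      try abel
    have case_bm : ∀ u v, cB e u → cM e v →
        K (u * v) - τ (u * v) = (K u - τ u) * v + u * (K v - τ v) := by
      intro b m hb hm
      have hD : cB e (f * K b * f - f * wed b * f) := gen_sub (gen_mk hf hf _) (gen_mk hf hf _)
      rw [zc (gen4 hfe hb) (gen1 he hm), map_zero, map_zero, sub_zero,
        hτm _ hm, sub_zero, hKBc _ hb,
        zc (gen4 hfe hD) (gen1 he hm),
        zc (gen4 hfe hb) (gen1 he (hKM _ hm)), add_zero]
    have case_nb : ∀ u v, cN e u → cB e v →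
        K (u * v) - τ (u * v) = (K u - τ u) * v + u * (K v - τ v) := by
      intro n b hn hb
      have hD : cB e (f * K b * f - f * wed b * f) := gen_sub (gen_mk hf hf _) (gen_mk hf hf _)
      rw [zc (gen4 hef hn) (gen1 hf hb), map_zero, map_zero, sub_zero,
        hτn _ hn, sub_zero, hKBc _ hb,
        zc (gen4 hef (hKN _ hn)) (gen1 hf hb),
        zc (gen4 hef hn) (gen1 hf hD), add_zero]
    have case_mm : ∀ u v, cM e u → cM e v →
        K (u * v) - τ (u * v) = (K u - τ u) * v + u * (K v - τ v) := by
      intro m m' hm hm'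
      rw [zc (gen4 hfe hm) (gen1 he hm'), map_zero, map_zero, sub_zero,
        hτm _ hm, sub_zero, hτm _ hm', sub_zero,
        zc (gen4 hfe (hKM _ hm)) (gen1 he hm'),
        zc (gen4 hfe hm) (gen1 he (hKM _ hm')), add_zero]
    have case_nn : ∀ u v, cN e u → cN e v →
        K (u * v) - τ (u * v) = (K u - τ u) * v + u * (K v - τ v) := by
      intro n n' hn hn'
      rw [zc (gen4 hef hn) (gen1 hf hn'), map_zero, map_zero, sub_zero,
        hτn _ hn, sub_zero, hτn _ hn', sub_zero,
        zc (gen4 hef (hKN _ hn)) (gen1 hf hn'),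
        zc (gen4 hef hn) (gen1 hf (hKN _ hn')), add_zero]
    have case_ab : ∀ u v, cA e u → cB e v →
        K (u * v) - τ (u * v) = (K u - τ u) * v + u * (K v - τ v) := by
      intro a b ha hb
      have hDa2 : cA e (e * K a * e - e * zed a * e) := gen_sub (gen_mk he he _) (gen_mk he he _)
      have hDb2 : cB e (f * K b * f - f * wed b * f) := gen_sub (gen_mk hf hf _) (gen_mk hf hf _)
      rw [zc (gen4 hef ha) (gen1 hf hb), map_zero, map_zero, sub_zero,
        hKAc _ ha, hKBc _ hb,
        zc (gen4 hef hDa2) (gen1 hf hb),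
        zc (gen4 hef ha) (gen1 hf hDb2), add_zero]
    have case_ba : ∀ u v, cB e u → cA e v →
        K (u * v) - τ (u * v) = (K u - τ u) * v + u * (K v - τ v) := by
      intro b a hb ha
      have hDa2 : cA e (e * K a * e - e * zed a * e) := gen_sub (gen_mk he he _) (gen_mk he he _)
      have hDb2 : cB e (f * K b * f - f * wed b * f) := gen_sub (gen_mk hf hf _) (gen_mk hf hf _)
      rw [zc (gen4 hfe hb) (gen1 he ha), map_zero, map_zero, sub_zero,
        hKAc _ ha, hKBc _ hb,
        zc (gen4 hfe hDb2) (gen1 he ha),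
        zc (gen4 hfe hb) (gen1 he hDa2), add_zero]
    -- the map L - τ is a derivation
    have hDer1 : ∀ x y : G, K (x*y) - τ (x*y) = (K x - τ x)*y + x*(K y - τ y) := by
      intro x y
      obtain ⟨a1, m1, n1, b1, ha1, hm1, hn1, hb1, hx⟩ :
          ∃ a m n b, cA e a ∧ cM e m ∧ cN e n ∧ cB e b ∧ x = a + m + n + b :=
        ⟨_, _, _, _, gen_mk he he x, gen_mk he hf x, gen_mk hf he x, gen_mk hf hf x,
          peirce_ef hu x⟩
      obtain ⟨a2, m2, n2, b2, ha2, hm2, hn2, hb2, hy⟩ :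
          ∃ a m n b, cA e a ∧ cM e m ∧ cN e n ∧ cB e b ∧ y = a + m + n + b :=
        ⟨_, _, _, _, gen_mk he he y, gen_mk he hf y, gen_mk hf he y, gen_mk hf hf y,
          peirce_ef hu y⟩
      subst hx; subst hy
      have expand : (a1 + m1 + n1 + b1) * (a2 + m2 + n2 + b2) = a1*a2 + a1*m2 + a1*n2 + a1*b2 + m1*a2 + m1*m2 + m1*n2 + m1*b2 + n1*a2 + n1*m2 + n1*n2 + n1*b2 + b1*a2 + b1*m2 + b1*n2 + b1*b2 := by
        noncomm_ring
      have step1 : K ((a1 + m1 + n1 + b1) * (a2 + m2 + n2 + b2)) -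
          τ ((a1 + m1 + n1 + b1) * (a2 + m2 + n2 + b2)) =
          (K (a1*a2) - τ (a1*a2)) +
          (K (a1*m2) - τ (a1*m2)) +
          (K (a1*n2) - τ (a1*n2)) +
          (K (a1*b2) - τ (a1*b2)) +
          (K (m1*a2) - τ (m1*a2)) +
          (K (m1*m2) - τ (m1*m2)) +
          (K (m1*n2) - τ (m1*n2)) +
          (K (m1*b2) - τ (m1*b2)) +
          (K (n1*a2) - τ (n1*a2)) +
          (K (n1*m2) - τ (n1*m2)) +
          (K (n1*n2) - τ (n1*n2)) +
          (K (n1*b2) - τ (n1*b2)) +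
          (K (b1*a2) - τ (b1*a2)) +
          (K (b1*m2) - τ (b1*m2)) +
          (K (b1*n2) - τ (b1*n2)) +
          (K (b1*b2) - τ (b1*b2)) := by
        rw [expand]
        simp only [map_add]
        abel
      rw [case_aa a1 a2 ha1 ha2, case_am a1 m2 ha1 hm2, case_an a1 n2 ha1 hn2, case_ab a1 b2 ha1 hb2, case_ma m1 a2 hm1 ha2, case_mm m1 m2 hm1 hm2, case_mn m1 n2 hm1 hn2, case_mb m1 b2 hm1 hb2, case_na n1 a2 hn1 ha2, case_nm n1 m2 hn1 hm2, case_nn n1 n2 hn1 hn2, case_nb n1 b2 hn1 hb2, case_ba b1 a2 hb1 ha2, case_bm b1 m2 hb1 hm2, case_bn b1 n2 hb1 hn2, case_bb b1 b2 hb1 hb2] at step1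
      rw [step1]
      simp only [map_add]
      noncomm_ring
    have hDer : IsDer (L - τ) := by
      intro x y
      simp only [LinearMap.sub_apply]
      have h1 := hDer1 x y
      rw [hKap (x*y), hKap x, hKap y] at h1
      have h2 : ((f*L e*e - e*L e*f)*(x*y) - (x*y)*(f*L e*e - e*L e*f)) = ((f*L e*e - e*L e*f)*(x) - (x)*(f*L e*e - e*L e*f))*y + x*((f*L e*e - e*L e*f)*(y) - (y)*(f*L e*e - e*L e*f)) := by noncomm_ring
      calc L (x*y) - τ (x*y)
          = ((L (x*y) - ((f*L e*e - e*L e*f)*(x*y) - (x*y)*(f*L e*e - e*L e*f))) - τ (x*y)) + ((f*L e*e - e*L e*f)*(x*y) - (x*y)*(f*L e*e - e*L e*f)) := by abel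
        _ = (((L x - ((f*L e*e - e*L e*f)*(x) - (x)*(f*L e*e - e*L e*f))) - τ x)*y + x*((L y - ((f*L e*e - e*L e*f)*(y) - (y)*(f*L e*e - e*L e*f))) - τ y)) +
            (((f*L e*e - e*L e*f)*(x) - (x)*(f*L e*e - e*L e*f))*y + x*((f*L e*e - e*L e*f)*(y) - (y)*(f*L e*e - e*L e*f))) := by rw [h1, h2]
        _ = (L x - τ x)*y + x*(L y - τ y) := by noncomm_ring
    refine ⟨L - τ, τ, hDer, hτC, ?_, ?_⟩
    · intro x y
      have h1 : τ (x*y - y*x) = L (x*y - y*x) - (L - τ) (x*y - y*x) := by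
        simp only [LinearMap.sub_apply]
        abel
      rw [h1, map_sub (L - τ), hDer x y, hDer y x, hL x y]
      simp only [LinearMap.sub_apply, sub_mul, mul_sub]
      rw [hτC x y, hτC y x]
      abel
    · ext x
      simp only [LinearMap.add_apply, LinearMap.sub_apply]
      abel
end

section
/- Suppose mn = 0 and nm = 0 for all m ∈ M and n ∈ N (G is a trivial generalized matrix algebra). Let L be a Lie derivation of G. If L is proper then hA(a) ∈ π_B(Z(G)) for all a ∈ A and hB(b) ∈ π_A(Z(G)) for all b ∈ B. Conversely, if M is faithful and hA(a) ∈ π_B(Z(G)) for all a ∈ A and hB(b) ∈ π_A(Z(G)) for all b ∈ B, then L is proper. -/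
/-!
Forward direction: if `L = D + τ` and `a = e a e`, the Leibniz rule for `a = e a` gives
`f D(a) f = 0` (`f = 1 - e`), so `f L(a) f = f τ(a) f` with `τ(a)` central.

Converse: subtracting the inner derivation `[u, -]`, `u = f L(e) e - e L(e) f`, makes `L e`
commute with `e`. Then `L` maps the centraliser of `e` into itself and, as `M` and `N` are
2-torsion free, preserves `M` and `N`. Faithfulness makes `z ↦ f z f` injective on the centre, so
`hA(A) ⊆ π_B(Z(G))` lifts `a ↦ f L(a) f` to a linear central-valued map `ψ_A`; it kills
commutators because `e [x, y] e = [e x e, e y e]` when `M N = 0`. With `ψ_B` built in the same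
way, `D = L - ψ_A - ψ_B` preserves the four Peirce corners, i.e. commutes with multiplication by
`e`. For such a Lie derivation the defect `D(x y) - D(x) y - x D(y)` is symmetric and balanced
over `e` and `f`, which kills its off-diagonal blocks and the `M × N` contributions; the
remaining diagonal contributions vanish by faithfulness and the cocycle identity.
-/

section Peirce

variable {G : Type*} [Ring G] {e p q x : G}

lemma peirce_decomposition (e x : G) :
    x = e * x * e + e * x * (1 - e) + (1 - e) * x * e + (1 - e) * x * (1 - e) := by
  noncomm_ring

lemma IsIdempotentElem.left_mul_eq_of_sandwich (hp : IsIdempotentElem p) (h : p * x * q = x) :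
    p * x = x := by
  rw [← h, ← mul_assoc, ← mul_assoc, hp.eq]

lemma IsIdempotentElem.right_mul_eq_of_sandwich (hq : IsIdempotentElem q)
    (h : p * x * q = x) : x * q = x := by
  rw [← h, mul_assoc, hq.eq]

lemma cA_sandwich (he : IsIdempotentElem e) (y : G) : cA e (e * y * e) := by
  rw [cA, ← mul_assoc, ← mul_assoc, he.eq, mul_assoc _ e e, he.eq]

lemma cM_sandwich (he : IsIdempotentElem e) (y : G) : cM e (e * y * (1 - e)) := by
  rw [cM, ← mul_assoc, ← mul_assoc, he.eq, mul_assoc _ (1 - e) (1 - e), he.one_sub.eq]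

lemma cN_sandwich (he : IsIdempotentElem e) (y : G) : cN e ((1 - e) * y * e) := by
  rw [cN, ← mul_assoc, ← mul_assoc, he.one_sub.eq, mul_assoc _ e e, he.eq]

lemma cM_one_sub_iff : cM (1 - e) x ↔ cN e x := by
  rw [cM, sub_sub_cancel, cN]

lemma cN_one_sub_iff : cN (1 - e) x ↔ cM e x := by
  rw [cN, sub_sub_cancel, cM]

lemma cM_of_corners (hA : e * x * e = 0) (hN : (1 - e) * x * e = 0)
    (hB : (1 - e) * x * (1 - e) = 0) : cM e x := by
  have hx := peirce_decomposition e x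
  rw [hA, hN, hB, zero_add, add_zero, add_zero] at hx
  exact hx.symm

lemma cA_of_commute (he : IsIdempotentElem e) (hc : Commute e x)
    (h : (1 - e) * x * (1 - e) = 0) : cA e x := by
  have hx : x = x * e := by
    simp only [sub_mul, mul_sub, one_mul, mul_one, hc.eq, mul_assoc, he.eq] at h
    rw [sub_self, sub_zero, sub_eq_zero] at h
    exact h
  rw [cA, hc.eq, mul_assoc, he.eq, ← hx]

lemma commute_of_commute_commutator (he : IsIdempotentElem e)
    (h : Commute e (e * x - x * e)) : Commute e x := by
  have hx : e * x - e * (x * e) = e * (x * e) - x * e := by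
    have := h.eq
    simp only [mul_sub, sub_mul, mul_assoc, he.mul_self_mul, he.eq] at this
    exact this
  have hl : e * x = e * (x * e) := by
    have := congrArg (e * ·) hx
    simp only [mul_sub, he.mul_self_mul, sub_self] at this
    exact sub_eq_zero.1 this
  rw [hl, sub_self, eq_comm, sub_eq_zero] at hx
  exact hl.trans hx

lemma sandwich_commutator_eq (he : IsIdempotentElem e)
    (hMN : ∀ x y : G, e * x * (1 - e) * ((1 - e) * y * e) = 0) (x y : G) :
    e * (x * y - y * x) * e = e * x * e * (e * y * e) - e * y * e * (e * x * e) := by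
  have hxy (x y : G) : e * (x * y) * e = e * x * e * (e * y * e) := by
    have h := hMN x y
    simp only [mul_sub, sub_mul, mul_one, one_mul, mul_assoc, he.mul_self_mul] at h ⊢
    rw [← sub_eq_zero, ← h]; abel
  rw [mul_sub, sub_mul, hxy, hxy]

lemma Ctr.commute {z : G} (hz : Ctr z) (x : G) : Commute x z := (hz x).symm

lemma Ctr.add {z w : G} (hz : Ctr z) (hw : Ctr w) : Ctr (z + w) := fun x => by
  rw [add_mul, mul_add, hz x, hw x]

lemma Ctr.sub {z w : G} (hz : Ctr z) (hw : Ctr w) : Ctr (z - w) := fun x => by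
  rw [sub_mul, mul_sub, hz x, hw x]

lemma Ctr.smul {R : Type*} [CommRing R] [Algebra R G] (r : R) {z : G} (hz : Ctr z) :
    Ctr (r • z) := fun x => by
  rw [smul_mul_assoc, mul_smul_comm, hz x]

lemma Ctr.mul_mul_self_of_isIdempotentElem {z : G} (hz : Ctr z) (hp : IsIdempotentElem p) :
    p * z * p = p * z := by
  rw [mul_assoc, hz p, ← mul_assoc, hp.eq]

lemma FaithfulM.eq_zero_of_one_sub_mul_mul (hF : FaithfulM e) (he : IsIdempotentElem e)
    {z : G} (hz : Ctr z) (h : (1 - e) * z * (1 - e) = 0) : z = 0 := by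
  rw [hz.mul_mul_self_of_isIdempotentElem he.one_sub] at h
  have hz' : e * z = z := by rwa [sub_mul, one_mul, sub_eq_zero, eq_comm] at h
  refine hF.1 z (by rw [cA, hz', hz e, hz']) fun m hm => ?_
  rw [hz m, ← hm, mul_assoc, h, mul_zero]

lemma FaithfulM.eq_zero_of_mul_mul (hF : FaithfulM e) (he : IsIdempotentElem e)
    {z : G} (hz : Ctr z) (h : e * z * e = 0) : z = 0 := by
  rw [hz.mul_mul_self_of_isIdempotentElem he] at h
  have hz' : (1 - e) * z = z := by rw [sub_mul, one_mul, h, sub_zero]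
  refine hF.2 z (by rw [cB, hz', hz, hz']) fun m hm => ?_
  rw [← hz m, ← hm, ← mul_assoc, ← mul_assoc, hz e, h, zero_mul, zero_mul]

end Peirce

section LieDerivation

variable {R G : Type*} [CommRing R] [Ring G] [Algebra R G] {e : G} {L : G →ₗ[R] G}

variable (R) in
def innerDer (u : G) : G →ₗ[R] G := LinearMap.mulLeft R u - LinearMap.mulRight R u

lemma innerDer_apply (u x : G) : innerDer R u x = u * x - x * u := rfl

lemma isDer_innerDer (u : G) : IsDer (innerDer R u) := by
  intro x y
  simp only [innerDer_apply]
  noncomm_ring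

lemma IsDer.add {D D' : G →ₗ[R] G} (hD : IsDer D) (hD' : IsDer D') : IsDer (D + D') := by
  intro x y
  simp only [LinearMap.add_apply, hD x y, hD' x y]
  noncomm_ring

lemma IsDer.isLieDer {D : G →ₗ[R] G} (hD : IsDer D) : IsLieDer D := by
  intro x y
  rw [map_sub, hD, hD]
  noncomm_ring

lemma IsLieDer.sub {K : G →ₗ[R] G} (hL : IsLieDer L) (hK : IsLieDer K) : IsLieDer (L - K) := by
  intro x y
  simp only [LinearMap.sub_apply, hL x y, hK x y]
  noncomm_ring

lemma isLieDer_of_ctr {τ : G →ₗ[R] G} (hctr : ∀ x, Ctr (τ x))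
    (hcomm : ∀ x y, τ (x * y - y * x) = 0) : IsLieDer τ := by
  intro x y
  rw [hcomm, hctr x y, hctr y x, sub_self, sub_self, add_zero]

lemma IsLieDer.ctr_map_one (hL : IsLieDer L) : Ctr (L 1) := by
  intro x
  have := hL 1 x
  rwa [one_mul, mul_one, sub_self, map_zero, one_mul, mul_one, sub_self, add_zero,
    eq_comm, sub_eq_zero] at this

lemma IsLieDer.commute_map_of_commute (hL : IsLieDer L) (he : IsIdempotentElem e)
    (hLe : Commute e (L e)) {x : G} (hx : Commute e x) : Commute e (L x) := by
  refine commute_of_commute_commutator he ?_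
  have h := hL e x
  rw [hx.eq, sub_self, map_zero, eq_comm, add_eq_zero_iff_neg_eq, neg_sub] at h
  rw [← h]
  exact (hx.mul_right hLe).sub_right (hLe.mul_right hx)

lemma IsLieDer.commute_one_sub (hL : IsLieDer L) (hLe : Commute e (L e)) :
    Commute (1 - e) (L (1 - e)) := by
  rw [map_sub]
  exact (hL.ctr_map_one.commute _).sub_right ((Commute.one_left _).sub_left hLe)

lemma IsLieDer.cM_map (hL : IsLieDer L) (he : IsIdempotentElem e) (hLe : Commute e (L e))
    (hN2 : ∀ x : G, cN e x → x + x = 0 → x = 0) {m : G} (hm : cM e m) : cM e (L m) := by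
  obtain ⟨x, rfl⟩ : ∃ x, m = e * x * (1 - e) := ⟨m, hm.symm⟩
  have hcomm : e * (e * x * (1 - e)) - e * x * (1 - e) * e = e * x * (1 - e) := by
    simp only [mul_sub, sub_mul, mul_one, mul_assoc, he.mul_self_mul, he.eq]
    abel
  have key := hL e (e * x * (1 - e))
  rw [hcomm] at key
  set y := L (e * x * (1 - e))
  have sandwich (p q : G) : p * y * q =
      p * (L e * (e * x * (1 - e)) - e * x * (1 - e) * L e + (e * y - y * e)) * q := by
    rw [← key]
  have hA : e * y * e = 0 := by
    have h := sandwich e e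
    simp only [mul_sub, sub_mul, mul_add, add_mul, mul_one, mul_assoc,
      he.mul_self_mul, he.eq, hLe.symm.eq, hLe.symm.left_comm] at h ⊢
    rw [h]; abel
  -- the `N`-component of `y` is its own negative
  have hN : (1 - e) * y * e = 0 := by
    refine hN2 _ (cN_sandwich he y) ?_
    have h := sandwich (1 - e) e
    simp only [mul_sub, sub_mul, mul_add, add_mul, mul_one, one_mul, mul_assoc,
      he.mul_self_mul, he.eq, hLe.symm.eq, hLe.symm.left_comm] at h ⊢
    nth_rewrite 1 [h]; abel
  have hB : (1 - e) * y * (1 - e) = 0 := by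
    have h := sandwich (1 - e) (1 - e)
    simp only [mul_sub, sub_mul, mul_add, add_mul, mul_one, one_mul, mul_assoc,
      he.mul_self_mul, he.eq, hLe.symm.eq, hLe.symm.left_comm] at h ⊢
    rw [h]; abel
  exact cM_of_corners hA hN hB

lemma IsLieDer.cN_map (hL : IsLieDer L) (he : IsIdempotentElem e) (hLe : Commute e (L e))
    (hM2 : ∀ x : G, cM e x → x + x = 0 → x = 0) {n : G} (hn : cN e n) : cN e (L n) := by
  rw [← cM_one_sub_iff] at hn ⊢
  exact hL.cM_map he.one_sub (hL.commute_one_sub hLe) (fun x hx => hM2 x (cN_one_sub_iff.1 hx)) hn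

lemma commute_sub_innerDer_apply_self (he : IsIdempotentElem e) (L : G →ₗ[R] G) :
    Commute e ((L - innerDer R ((1 - e) * L e * e - e * L e * (1 - e))) e) := by
  rw [Commute, SemiconjBy]
  simp only [LinearMap.sub_apply, innerDer_apply, mul_sub, sub_mul, mul_one, one_mul, mul_assoc,
    he.mul_self_mul, he.eq]
  abel

lemma one_sub_mul_innerDer_mul_one_sub (he : IsIdempotentElem e) {a : G} (ha : cA e a)
    (u : G) : (1 - e) * innerDer R u a * (1 - e) = 0 := by
  obtain ⟨x, rfl⟩ : ∃ x, a = e * x * e := ⟨a, ha.symm⟩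
  simp [innerDer_apply, mul_sub, sub_mul, mul_assoc, he.mul_self_mul, he.eq]

end LieDerivation

section CenterLift

variable {R G : Type*} [CommRing R] [Ring G] [Algebra R G] {e : G} {L : G →ₗ[R] G}

lemma exists_ctr_lift (p : G) (hinj : ∀ z, Ctr z → p * z * p = 0 → z = 0)
    (φ : G →ₗ[R] G) (hφ : ∀ x, ∃ z, Ctr z ∧ p * z * p = φ x) :
    ∃ ψ : G →ₗ[R] G, ∀ x, Ctr (ψ x) ∧ p * ψ x * p = φ x := by
  choose ψ hctr hψ using hφ
  have hunique {z w : G} (hz : Ctr z) (hw : Ctr w) (h : p * z * p = p * w * p) : z = w :=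
    sub_eq_zero.1 (hinj _ (hz.sub hw) (by rw [mul_sub, sub_mul, h, sub_self]))
  refine ⟨{ toFun := ψ, map_add' := fun x y => ?_, map_smul' := fun r x => ?_ },
    fun x => ⟨hctr x, hψ x⟩⟩
  · refine hunique (hctr _) ((hctr x).add (hctr y)) ?_
    rw [hψ, map_add, mul_add, add_mul, hψ, hψ]
  · refine hunique (hctr _) ((hctr x).smul r) ?_
    rw [hψ, map_smul, RingHom.id_apply, mul_smul_comm, smul_mul_assoc, hψ]

/-- The `A`-half of the central part `τ` of `L = D + τ`; the `B`-half is `IsCenterLift (1 - e)`. -/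
def IsCenterLift (e : G) (L ψ : G →ₗ[R] G) : Prop :=
  (∀ x, Ctr (ψ x)) ∧ (∀ x, (1 - e) * ψ x * (1 - e) = (1 - e) * L (e * x * e) * (1 - e)) ∧
    (∀ x, e * x * e = 0 → ψ x = 0) ∧ ∀ x y, ψ (x * y - y * x) = 0

lemma IsLieDer.exists_isCenterLift (hL : IsLieDer L) (he : IsIdempotentElem e)
    (hinj : ∀ z, Ctr z → (1 - e) * z * (1 - e) = 0 → z = 0)
    (hMN : ∀ x y : G, e * x * (1 - e) * ((1 - e) * y * e) = 0)
    (hA : ∀ a, cA e a → ∃ z, Ctr z ∧ (1 - e) * L a * (1 - e) = (1 - e) * z * (1 - e)) :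
    ∃ ψ : G →ₗ[R] G, IsCenterLift e L ψ := by
  obtain ⟨ψ, hψ⟩ := exists_ctr_lift (1 - e) hinj
    (LinearMap.mulLeftRight R (1 - e, 1 - e) ∘ₗ L ∘ₗ LinearMap.mulLeftRight R (e, e))
    fun x => (hA _ (cA_sandwich he x)).imp fun _ hz => ⟨hz.1, hz.2.symm⟩
  simp only [LinearMap.comp_apply, LinearMap.mulLeftRight_apply] at hψ
  have hzero (x : G) (hx : e * x * e = 0) : ψ x = 0 :=
    hinj _ (hψ x).1 (by rw [(hψ x).2, hx, map_zero, mul_zero, zero_mul])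
  refine ⟨ψ, fun x => (hψ x).1, fun x => (hψ x).2, hzero, fun x y => hinj _ (hψ _).1 ?_⟩
  rw [(hψ _).2, sandwich_commutator_eq he hMN, hL]
  simp only [mul_sub, sub_mul, mul_add, add_mul, mul_one, one_mul, mul_assoc, he.mul_self_mul,
    he.eq]
  abel

end CenterLift

section DerivDefect

variable {R G : Type*} [CommRing R] [Ring G] [Algebra R G] {e p q : G} {D : G →ₗ[R] G}

variable (D) in
def derivDefect (x y : G) : G := D (x * y) - D x * y - x * D y

lemma isDer_of_derivDefect_eq_zero (h : ∀ x y, derivDefect D x y = 0) : IsDer D :=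
  fun x y => by rw [← sub_eq_zero, ← sub_sub]; exact h x y

lemma derivDefect_add_left (x x' y : G) :
    derivDefect D (x + x') y = derivDefect D x y + derivDefect D x' y := by
  simp only [derivDefect, add_mul, map_add]
  abel

lemma derivDefect_cocycle (x y z : G) :
    derivDefect D x y * z + derivDefect D (x * y) z =
      derivDefect D x (y * z) + x * derivDefect D y z := by
  simp only [derivDefect, mul_assoc]
  noncomm_ring

lemma IsLieDer.derivDefect_comm (hD : IsLieDer D) (x y : G) :
    derivDefect D x y = derivDefect D y x := by
  have h := hD x y
  rw [map_sub, sub_eq_iff_eq_add] at h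
  simp only [derivDefect, h]
  abel

lemma derivDefect_mul_left (hp : ∀ x, D (p * x) = p * D x) (x y : G) :
    derivDefect D (p * x) y = p * derivDefect D x y := by
  simp only [derivDefect, mul_assoc, hp]
  noncomm_ring

lemma derivDefect_mul_right (hq : ∀ x, D (x * q) = D x * q) (x y : G) :
    derivDefect D x (y * q) = derivDefect D x y * q := by
  simp only [derivDefect, ← mul_assoc, hq]
  noncomm_ring

lemma derivDefect_mul_mul (hp : ∀ x, D (p * x) = p * D x) (hq : ∀ x, D (x * q) = D x * q)
    (x y : G) : derivDefect D (p * x) (y * q) = p * derivDefect D x y * q := by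
  rw [derivDefect_mul_left hp, derivDefect_mul_right hq, mul_assoc]

lemma derivDefect_mul_self_mul (hpl : ∀ x, D (p * x) = p * D x)
    (hpr : ∀ x, D (x * p) = D x * p) (x y : G) :
    derivDefect D (x * p) y = derivDefect D x (p * y) := by
  simp only [derivDefect, mul_assoc, hpl, hpr]

lemma IsLieDer.mul_derivDefect_mul_eq_zero (hD : IsLieDer D) (hqp : q * p = 0)
    (hpl : ∀ x, D (p * x) = p * D x) (hql : ∀ x, D (q * x) = q * D x)
    (hqr : ∀ x, D (x * q) = D x * q) (x y : G) : p * derivDefect D x y * q = 0 := by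
  rw [← derivDefect_mul_mul hpl hqr, hD.derivDefect_comm, derivDefect_mul_self_mul hql hqr,
    ← mul_assoc, hqp, zero_mul]
  simp only [derivDefect, mul_zero, map_zero, sub_zero]

lemma map_one_sub_mul (hl : ∀ x, D (e * x) = e * D x) (x : G) :
    D ((1 - e) * x) = (1 - e) * D x := by
  rw [sub_mul, one_mul, map_sub, hl, sub_mul, one_mul]

lemma map_mul_one_sub (hr : ∀ x, D (x * e) = D x * e) (x : G) :
    D (x * (1 - e)) = D x * (1 - e) := by
  rw [mul_sub, mul_one, map_sub, hr, mul_sub, mul_one]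

lemma derivDefect_eq_add (he : IsIdempotentElem e) (hl : ∀ x, D (e * x) = e * D x)
    (hr : ∀ x, D (x * e) = D x * e) (u v : G) :
    derivDefect D u v =
      derivDefect D (u * e) (e * v) + derivDefect D (u * (1 - e)) ((1 - e) * v) := by
  conv_lhs => rw [show u = u * e * e + u * (1 - e) * (1 - e) by
    rw [he.mul_mul_self, he.one_sub.mul_mul_self]; noncomm_ring]
  rw [derivDefect_add_left, derivDefect_mul_self_mul hl hr,
    derivDefect_mul_self_mul (map_one_sub_mul hl) (map_mul_one_sub hr)]

lemma IsLieDer.derivDefect_eq_zero_of_left_right (hD : IsLieDer D) (he : IsIdempotentElem e)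
    (hl : ∀ x, D (e * x) = e * D x) (hr : ∀ x, D (x * e) = D x * e) {u v : G}
    (hu : e * u = u) (hv : v * (1 - e) = v) : derivDefect D u v = 0 := by
  rw [← hu, ← hv, derivDefect_mul_mul hl (map_mul_one_sub hr),
    hD.mul_derivDefect_mul_eq_zero he.one_sub_mul_self hl (map_one_sub_mul hl)
      (map_mul_one_sub hr)]

/-- An `M × N` defect is both an `e`-sandwich and, by symmetry, a `(1 - e)`-sandwich. -/
lemma IsLieDer.derivDefect_cM_cN (hD : IsLieDer D) (he : IsIdempotentElem e)
    (hl : ∀ x, D (e * x) = e * D x) (hr : ∀ x, D (x * e) = D x * e) (x y : G) :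
    derivDefect D (e * x * (1 - e)) ((1 - e) * y * e) = 0 := by
  have h1 := derivDefect_mul_mul hl hr (x * (1 - e)) ((1 - e) * y)
  have h2 := derivDefect_mul_mul (map_one_sub_mul hl) (map_mul_one_sub hr) (y * e) (e * x)
  rw [← mul_assoc] at h1 h2
  rw [← hD.derivDefect_comm] at h2
  have h3 : derivDefect D (e * x * (1 - e)) ((1 - e) * y * e) =
      e * derivDefect D (e * x * (1 - e)) ((1 - e) * y * e) * e := by
    rw [h1]; simp only [mul_assoc, he.mul_self_mul, he.eq]
  rw [h3, h2]
  simp only [mul_assoc, he.one_sub_mul_self, mul_zero]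

lemma IsLieDer.derivDefect_cA_cA (hD : IsLieDer D) (he : IsIdempotentElem e)
    (hF : FaithfulM e) (hl : ∀ x, D (e * x) = e * D x) (hr : ∀ x, D (x * e) = D x * e)
    {a₁ a₂ : G} (h₁ : cA e a₁) (h₂ : cA e a₂) : derivDefect D a₁ a₂ = 0 := by
  refine hF.1 _ ?_ fun m hm => ?_
  · rw [← h₁, ← h₂, mul_assoc e a₁, derivDefect_mul_mul hl hr]
    exact cA_sandwich he _
  · have hea₁ := he.left_mul_eq_of_sandwich h₁
    have hmf := he.one_sub.right_mul_eq_of_sandwich hm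
    have hc := derivDefect_cocycle (D := D) a₁ a₂ m
    have hδ₁ : derivDefect D a₁ (a₂ * m) = 0 :=
      hD.derivDefect_eq_zero_of_left_right he hl hr hea₁ (by rw [mul_assoc, hmf])
    have hδ₂ : derivDefect D a₂ m = 0 :=
      hD.derivDefect_eq_zero_of_left_right he hl hr (he.left_mul_eq_of_sandwich h₂) hmf
    have hδ₃ : derivDefect D (a₁ * a₂) m = 0 :=
      hD.derivDefect_eq_zero_of_left_right he hl hr (by rw [← mul_assoc, hea₁]) hmf
    rwa [hδ₁, hδ₂, hδ₃, mul_zero, add_zero, add_zero] at hc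

lemma IsLieDer.derivDefect_cB_cB (hD : IsLieDer D) (he : IsIdempotentElem e)
    (hF : FaithfulM e) (hl : ∀ x, D (e * x) = e * D x) (hr : ∀ x, D (x * e) = D x * e)
    {b₁ b₂ : G} (h₁ : cB e b₁) (h₂ : cB e b₂) : derivDefect D b₁ b₂ = 0 := by
  refine hF.2 _ ?_ fun m hm => ?_
  · rw [← h₁, ← h₂, mul_assoc (1 - e) b₁,
      derivDefect_mul_mul (map_one_sub_mul hl) (map_mul_one_sub hr)]
    exact cA_sandwich he.one_sub _
  · have hem := he.left_mul_eq_of_sandwich hm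
    have hb₂f := he.one_sub.right_mul_eq_of_sandwich h₂
    have hc := derivDefect_cocycle (D := D) m b₁ b₂
    have hδ₁ : derivDefect D m b₁ = 0 :=
      hD.derivDefect_eq_zero_of_left_right he hl hr hem (he.one_sub.right_mul_eq_of_sandwich h₁)
    have hδ₂ : derivDefect D (m * b₁) b₂ = 0 :=
      hD.derivDefect_eq_zero_of_left_right he hl hr (by rw [← mul_assoc, hem]) hb₂f
    have hδ₃ : derivDefect D m (b₁ * b₂) = 0 :=
      hD.derivDefect_eq_zero_of_left_right he hl hr hem (by rw [mul_assoc, hb₂f])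
    rw [hδ₁, hδ₂, hδ₃, zero_mul, add_zero, zero_add] at hc
    exact hc.symm

theorem IsLieDer.isDer_of_commute_mul (hD : IsLieDer D) (he : IsIdempotentElem e)
    (hF : FaithfulM e) (hl : ∀ x, D (e * x) = e * D x) (hr : ∀ x, D (x * e) = D x * e) :
    IsDer D := by
  have hl' := map_one_sub_mul hl
  have hr' := map_mul_one_sub hr
  refine isDer_of_derivDefect_eq_zero fun x y => ?_
  rw [peirce_decomposition e (derivDefect D x y),
    hD.mul_derivDefect_mul_eq_zero he.one_sub_mul_self hl hl' hr',
    hD.mul_derivDefect_mul_eq_zero he.mul_one_sub_self hl' hl hr, add_zero, add_zero,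
    ← derivDefect_mul_mul hl hr, ← derivDefect_mul_mul hl' hr',
    derivDefect_eq_add he hl hr (e * x), derivDefect_eq_add he hl hr ((1 - e) * x)]
  simp only [← mul_assoc]
  rw [hD.derivDefect_cA_cA he hF hl hr (cA_sandwich he x) (cA_sandwich he y),
    hD.derivDefect_cM_cN he hl hr, hD.derivDefect_comm ((1 - e) * x * e),
    hD.derivDefect_cM_cN he hl hr,
    hD.derivDefect_cB_cB he hF hl hr (cA_sandwich he.one_sub x) (cA_sandwich he.one_sub y),
    add_zero, add_zero]

end DerivDefect

section Proper

variable {R G : Type*} [CommRing R] [Ring G] [Algebra R G] {e : G} {L : G →ₗ[R] G}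

lemma map_mul_eq_of_corners (he : IsIdempotentElem e) {D : G →ₗ[R] G}
    (hA : ∀ x, cA e (D (e * x * e))) (hM : ∀ x, cM e (D (e * x * (1 - e))))
    (hN : ∀ x, cN e (D ((1 - e) * x * e))) (hB : ∀ x, cB e (D ((1 - e) * x * (1 - e)))) :
    (∀ x, D (e * x) = e * D x) ∧ ∀ x, D (x * e) = D x * e := by
  have hD (x : G) : D x = e * D (e * x * e) * e + e * D (e * x * (1 - e)) * (1 - e) +
      (1 - e) * D ((1 - e) * x * e) * e + (1 - e) * D ((1 - e) * x * (1 - e)) * (1 - e) := by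
    conv_lhs => rw [peirce_decomposition e x]
    rw [map_add, map_add, map_add, hA, hM, hN, hB]
  refine ⟨fun x => ?_, fun x => ?_⟩
  · rw [hD, hD x]
    simp [mul_add, mul_sub, sub_mul, mul_assoc, he.mul_self_mul]
  · rw [hD, hD x]
    simp [add_mul, mul_sub, sub_mul, mul_assoc, he.eq]

lemma IsLieDer.cA_map_sub_add (hL : IsLieDer L) (he : IsIdempotentElem e)
    (hLe : Commute e (L e)) {ψ ψ' : G →ₗ[R] G} (hψ : IsCenterLift e L ψ)
    (hψ' : IsCenterLift (1 - e) L ψ') (x : G) : cA e ((L - (ψ + ψ')) (e * x * e)) := by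
  have h0 : ψ' (e * x * e) = 0 :=
    hψ'.2.2.1 _ (by simp [mul_sub, sub_mul, mul_assoc, he.mul_self_mul])
  rw [LinearMap.sub_apply, LinearMap.add_apply, h0, add_zero]
  refine cA_of_commute he ((hL.commute_map_of_commute he hLe ?_).sub_right ((hψ.1 _).commute e)) ?_
  · rw [Commute, SemiconjBy, ← mul_assoc, ← mul_assoc, he.eq, mul_assoc _ e e, he.eq]
  · rw [mul_sub (1 - e), sub_mul _ _ (1 - e), hψ.2.1, cA_sandwich he x, sub_self]

theorem IsLieDer.isProper_of_commute (hL : IsLieDer L) (he : IsIdempotentElem e)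
    (hLe : Commute e (L e)) (hF : FaithfulM e)
    (hM2 : ∀ x : G, cM e x → x + x = 0 → x = 0) (hN2 : ∀ x : G, cN e x → x + x = 0 → x = 0)
    (htriv : ∀ m n : G, cM e m → cN e n → m * n = 0 ∧ n * m = 0)
    (hA : ∀ a, cA e a → ∃ z, Ctr z ∧ (1 - e) * L a * (1 - e) = (1 - e) * z * (1 - e))
    (hB : ∀ b, cB e b → ∃ z, Ctr z ∧ e * L b * e = e * z * e) : IsProper L := by
  obtain ⟨ψA, hψA⟩ := hL.exists_isCenterLift he (fun _ hz => hF.eq_zero_of_one_sub_mul_mul he hz)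
    (fun x y => (htriv _ _ (cM_sandwich he x) (cN_sandwich he y)).1) hA
  obtain ⟨ψB, hψB⟩ := hL.exists_isCenterLift he.one_sub
    (by simpa only [sub_sub_cancel] using fun _ hz => hF.eq_zero_of_mul_mul he hz)
    (by simpa only [sub_sub_cancel] using
      fun x y => (htriv _ _ (cM_sandwich he y) (cN_sandwich he x)).2)
    fun b hb => by simpa only [sub_sub_cancel] using hB b hb
  have hψA' : IsCenterLift (1 - (1 - e)) L ψA := by rwa [sub_sub_cancel]
  have hτ (x : G) : Ctr ((ψA + ψB) x) := (hψA.1 x).add (hψB.1 x)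
  have hτc (x y : G) : (ψA + ψB) (x * y - y * x) = 0 := by
    rw [LinearMap.add_apply, hψA.2.2.2, hψB.2.2.2, add_zero]
  have hτ0 (x : G) (h₁ : e * x * e = 0) (h₂ : (1 - e) * x * (1 - e) = 0) : (ψA + ψB) x = 0 := by
    rw [LinearMap.add_apply, hψA.2.2.1 x h₁, hψB.2.2.1 x h₂, add_zero]
  have hcorners := map_mul_eq_of_corners he (D := L - (ψA + ψB))
    (hL.cA_map_sub_add he hLe hψA hψB)
    (fun x => by
      rw [LinearMap.sub_apply, hτ0 _ (by simp [mul_sub, sub_mul, mul_assoc, he.mul_self_mul, he.eq])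
        (by simp [mul_sub, sub_mul, mul_assoc, he.mul_self_mul]), sub_zero]
      exact hL.cM_map he hLe hN2 (cM_sandwich he x))
    (fun x => by
      rw [LinearMap.sub_apply, hτ0 _ (by simp [mul_sub, sub_mul, mul_assoc, he.mul_self_mul])
        (by simp [mul_sub, sub_mul, mul_assoc, he.mul_self_mul, he.eq]), sub_zero]
      exact hL.cN_map he hLe hM2 (cN_sandwich he x))
    (fun x => add_comm ψB ψA ▸ hL.cA_map_sub_add he.one_sub (hL.commute_one_sub hLe) hψB hψA' x)
  have hD := (hL.sub (isLieDer_of_ctr hτ hτc)).isDer_of_commute_mul he hF hcorners.1 hcorners.2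
  exact ⟨_, _, hD, hτ, hτc, (sub_add_cancel L _).symm⟩

lemma IsProper.add_isDer (hL : IsProper L) {D : G →ₗ[R] G} (hD : IsDer D) :
    IsProper (L + D) := by
  obtain ⟨D', τ, hD', hτ, hτc, rfl⟩ := hL
  exact ⟨D' + D, τ, hD'.add hD, hτ, hτc, add_right_comm _ _ _⟩

theorem IsLieDer.isProper (hL : IsLieDer L) (he : IsIdempotentElem e) (hF : FaithfulM e)
    (hM2 : ∀ x : G, cM e x → x + x = 0 → x = 0) (hN2 : ∀ x : G, cN e x → x + x = 0 → x = 0)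
    (htriv : ∀ m n : G, cM e m → cN e n → m * n = 0 ∧ n * m = 0)
    (hA : ∀ a, cA e a → ∃ z, Ctr z ∧ (1 - e) * L a * (1 - e) = (1 - e) * z * (1 - e))
    (hB : ∀ b, cB e b → ∃ z, Ctr z ∧ e * L b * e = e * z * e) : IsProper L := by
  set u := (1 - e) * L e * e - e * L e * (1 - e)
  have hP := (hL.sub (isDer_innerDer (R := R) u).isLieDer).isProper_of_commute he
    (commute_sub_innerDer_apply_self he L) hF hM2 hN2 htriv
    (fun a ha => by
      rw [LinearMap.sub_apply, mul_sub (1 - e), sub_mul _ _ (1 - e),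
        one_sub_mul_innerDer_mul_one_sub he ha, sub_zero]
      exact hA a ha)
    (fun b hb => by
      have h := one_sub_mul_innerDer_mul_one_sub (R := R) he.one_sub hb u
      rw [sub_sub_cancel] at h
      rw [LinearMap.sub_apply, mul_sub e, sub_mul _ _ e, h, sub_zero]
      exact hB b hb)
  simpa using hP.add_isDer (isDer_innerDer (R := R) u)

lemma IsDer.one_sub_mul_map_mul_one_sub {D : G →ₗ[R] G} (hD : IsDer D)
    (he : IsIdempotentElem e) {a : G} (ha : cA e a) : (1 - e) * D a * (1 - e) = 0 := by
  obtain ⟨x, rfl⟩ : ∃ x, a = e * x * e := ⟨a, ha.symm⟩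
  rw [mul_assoc e x e, hD]
  simp [mul_sub, sub_mul, mul_add, mul_assoc, he.mul_self_mul, he.eq]

lemma IsProper.exists_ctr_sandwich (hL : IsProper L) (he : IsIdempotentElem e) {a : G}
    (ha : cA e a) : ∃ z, Ctr z ∧ (1 - e) * L a * (1 - e) = (1 - e) * z * (1 - e) := by
  obtain ⟨D, τ, hD, hτ, -, rfl⟩ := hL
  refine ⟨τ a, hτ a, ?_⟩
  rw [LinearMap.add_apply, mul_add, add_mul, hD.one_sub_mul_map_mul_one_sub he ha, zero_add]

end Proper

theorem stmt_9_general
    {R : Type*} [CommRing R] {G : Type*} [Ring G] [Algebra R G]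
    (e : G) (he : e * e = e)
    (hM2 : ∀ x : G, cM e x → x + x = 0 → x = 0)
    (hN2 : ∀ x : G, cN e x → x + x = 0 → x = 0)
    (htriv : ∀ m n : G, cM e m → cN e n → m * n = 0 ∧ n * m = 0)
    (L : G →ₗ[R] G) (hL : IsLieDer L) :
    (IsProper L →
      ((∀ a : G, cA e a →
          ∃ z : G, Ctr z ∧ (1 - e) * L a * (1 - e) = (1 - e) * z * (1 - e)) ∧
        (∀ b : G, cB e b → ∃ z : G, Ctr z ∧ e * L b * e = e * z * e))) ∧
    (FaithfulM e →
      ((∀ a : G, cA e a →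
          ∃ z : G, Ctr z ∧ (1 - e) * L a * (1 - e) = (1 - e) * z * (1 - e)) ∧
        (∀ b : G, cB e b → ∃ z : G, Ctr z ∧ e * L b * e = e * z * e)) →
      IsProper L) := by
  have he' : IsIdempotentElem e := he
  refine ⟨fun hP => ⟨fun a ha => hP.exists_ctr_sandwich he' ha, fun b hb => ?_⟩,
    fun hF ⟨hA, hB⟩ => hL.isProper he' hF hM2 hN2 htriv hA hB⟩
  simpa only [sub_sub_cancel] using hP.exists_ctr_sandwich he'.one_sub hb

/-- Corollary 4.1, first part: in a trivial generalized matrix algebra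
(`MN = 0 = NM`), a proper Lie derivation `L` satisfies `hA(A) ⊆ π_B(Z(G))` and
`hB(B) ⊆ π_A(Z(G))`; the converse holds when `M` is faithful. -/
theorem stmt_9
    {R : Type*} [CommRing R] {G : Type*} [Ring G] [Algebra R G]
    (e : G) (he : e * e = e) (he0 : e ≠ 0) (he1 : e ≠ 1)
    (hM2 : ∀ x : G, cM e x → x + x = 0 → x = 0)
    (hN2 : ∀ x : G, cN e x → x + x = 0 → x = 0)
    (htriv : ∀ m n : G, cM e m → cN e n → m * n = 0 ∧ n * m = 0)
    (L : G →ₗ[R] G) (hL : IsLieDer L) :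
    (IsProper L →
      ((∀ a : G, cA e a →
          ∃ z : G, Ctr z ∧ (1 - e) * L a * (1 - e) = (1 - e) * z * (1 - e)) ∧
        (∀ b : G, cB e b → ∃ z : G, Ctr z ∧ e * L b * e = e * z * e))) ∧
    (FaithfulM e →
      ((∀ a : G, cA e a →
          ∃ z : G, Ctr z ∧ (1 - e) * L a * (1 - e) = (1 - e) * z * (1 - e)) ∧
        (∀ b : G, cB e b → ∃ z : G, Ctr z ∧ e * L b * e = e * z * e)) →
      IsProper L) :=
  stmt_9_general e he hM2 hN2 htriv L hL
end
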